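/- arXiv:2006.16548 — 9 statements merged into one kernel-verified Lean document; each statement's English description precedes it below -/
import Mathlib

section
/- Let q^{θ*}(y) = α* φ(y-θ*) + (1-α*) φ(y+θ*) with φ the standard Gaussian density, θ* > 0 and α* > 1/2. Then for every θ ∈ ℝ, G(θ, 1/2) < α*, where G(θ,α) = ∫ (α e^{θy} / (α e^{θy} + (1-α) e^{-θy})) q^{θ*}(y) dy. Consequently the unique α(θ) ∈ (0,1) satisfying G(θ,α(θ)) = α* satisfies α(θ) > 1/2. -/
/-!
At `α = 1/2` the responsibility weight is the logistic function `f y = σ(2θy)`, which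
satisfies `f (-y) = 1 - f y`. Since the two mixture components are reflections of each
other, with `A = ∫ f φ(· - θ*) < 1` this gives `G(θ, 1/2) = α* A + (1 - α*) (1 - A)`,
which is `< α*` exactly because `α* > 1/2`. Strict monotonicity of `G θ` then forces
`α(θ) > 1/2`.
-/

open MeasureTheory Real Set ProbabilityTheory

section

variable {X : Type*} [MeasurableSpace X] {μ : Measure X} [NeZero μ]

lemma integral_pos_of_forall_pos {g : X → ℝ} (hg : Integrable g μ) (hg0 : ∀ x, 0 < g x) :
    0 < ∫ x, g x ∂μ := by
  have hsupp : Function.support g = univ := eq_univ_of_forall fun x => (hg0 x).ne'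
  rw [integral_pos_iff_support_of_nonneg (fun x => (hg0 x).le) hg, hsupp,
    Measure.measure_univ_pos]
  exact NeZero.ne μ

lemma integral_mul_lt_integral_of_lt_one {f p : X → ℝ}
    (hfp : Integrable (fun x => f x * p x) μ) (hf1 : ∀ x, f x < 1) (hp : Integrable p μ)
    (hp0 : ∀ x, 0 < p x) :
    ∫ x, f x * p x ∂μ < ∫ x, p x ∂μ := by
  have hpos : 0 < ∫ x, (p x - f x * p x) ∂μ :=
    integral_pos_of_forall_pos (hp.sub hfp) fun x => by nlinarith [hp0 x, hf1 x]
  rw [integral_sub hp hfp] at hpos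
  linarith

end

section

variable {G : Type*} [MeasurableSpace G] [AddGroup G] [MeasurableNeg G] {μ : Measure G}
  [μ.IsNegInvariant]

lemma integral_mul_comp_neg_of_neg_eq_one_sub {f p : G → ℝ} (hf : ∀ x, f (-x) = 1 - f x)
    (hp : Integrable p μ) (hfp : Integrable (fun x => f x * p x) μ) :
    ∫ x, f x * p (-x) ∂μ = ∫ x, p x ∂μ - ∫ x, f x * p x ∂μ := by
  rw [← integral_neg_eq_self, ← integral_sub hp hfp]
  congr 1 with x
  rw [neg_neg, hf]
  ring

lemma integral_mul_reflected_mixture_lt [NeZero μ] {f p : G → ℝ} {a : ℝ} (ha : 1 / 2 < a)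
    (hf : AEStronglyMeasurable f μ) (hf0 : ∀ x, 0 ≤ f x) (hf1 : ∀ x, f x < 1)
    (hfneg : ∀ x, f (-x) = 1 - f x) (hp : Integrable p μ) (hp0 : ∀ x, 0 < p x) :
    ∫ x, f x * (a * p x + (1 - a) * p (-x)) ∂μ < a * ∫ x, p x ∂μ := by
  have hbdd : ∀ᵐ x ∂μ, ‖f x‖ ≤ 1 :=
    ae_of_all _ fun x => by rw [norm_of_nonneg (hf0 x)]; exact (hf1 x).le
  have hfp : Integrable (fun x => f x * p x) μ := hp.bdd_mul hf hbdd
  have hfp' : Integrable (fun x => f x * p (-x)) μ := hp.comp_neg.bdd_mul hf hbdd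
  have hlt := integral_mul_lt_integral_of_lt_one hfp hf1 hp hp0
  calc ∫ x, f x * (a * p x + (1 - a) * p (-x)) ∂μ
      = a * ∫ x, f x * p x ∂μ + (1 - a) * ∫ x, f x * p (-x) ∂μ := by
        simp_rw [mul_add, mul_left_comm (f _)]
        rw [integral_add (hfp.const_mul a) (hfp'.const_mul (1 - a)), integral_const_mul,
          integral_const_mul]
    _ < a * ∫ x, p x ∂μ := by
        rw [integral_mul_comp_neg_of_neg_eq_one_sub hfneg hp hfp]
        nlinarith

end

lemma half_mul_exp_div_eq_sigmoid (t : ℝ) :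
    1 / 2 * exp t / (1 / 2 * exp t + (1 - 1 / 2) * exp (-t)) = sigmoid (2 * t) := by
  have h : exp (-(2 * t)) = exp (-t) / exp t := by
    rw [← exp_sub]; ring_nf
  rw [sigmoid_def, h]
  field_simp
  ring

theorem stmt_1_general (θstar αstar : ℝ) (hα : 1/2 < αstar)
    (q : ℝ → ℝ)
    (hq : ∀ y, q y = αstar * ((Real.sqrt (2 * Real.pi))⁻¹ * Real.exp (-((y - θstar) ^ 2) / 2))
        + (1 - αstar) * ((Real.sqrt (2 * Real.pi))⁻¹ * Real.exp (-((y + θstar) ^ 2) / 2)))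
    (G : ℝ → ℝ → ℝ)
    (hG : ∀ θ α, G θ α = ∫ y, (α * Real.exp (θ * y) /
        (α * Real.exp (θ * y) + (1 - α) * Real.exp (-(θ * y)))) * q y)
    (hmono : ∀ θ, StrictMonoOn (G θ) (Set.Icc (0:ℝ) 1)) :
    ∀ θ : ℝ, G θ (1/2) < αstar ∧
      ∀ α ∈ Set.Ioo (0:ℝ) 1, G θ α = αstar → 1/2 < α := by
  intro θ
  have hq_gauss : ∀ y, q y = αstar * gaussianPDFReal θstar 1 y
      + (1 - αstar) * gaussianPDFReal θstar 1 (-y) := fun y => by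
    simp only [hq, gaussianPDFReal, NNReal.coe_one, mul_one]
    ring_nf
  have key : G θ (1/2) < αstar := by
    have h := integral_mul_reflected_mixture_lt (μ := volume)
      (f := fun y => sigmoid (2 * (θ * y))) hα
      (continuous_sigmoid.comp (by fun_prop)).aestronglyMeasurable
      (fun _ => sigmoid_nonneg _) (fun _ => sigmoid_lt_one _)
      (fun _ => by simp only [mul_neg, sigmoid_neg]) (integrable_gaussianPDFReal θstar 1)
      (fun y => gaussianPDFReal_pos _ _ y one_ne_zero)
    rw [integral_gaussianPDFReal_eq_one _ one_ne_zero, mul_one] at h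
    simpa only [hG, half_mul_exp_div_eq_sigmoid, hq_gauss] using h
  refine ⟨key, fun α hα01 hGα => ?_⟩
  exact ((hmono θ).lt_iff_lt (by norm_num) ⟨hα01.1.le, hα01.2.le⟩).1 (hGα ▸ key)

/-- With q^{θ*} the two-Gaussian mixture (weights α* > 1/2, means ±θ*,
unit variances), G(θ, 1/2) < α* for every θ; consequently the unique α(θ) ∈ (0,1)
with G(θ, α(θ)) = α* satisfies α(θ) > 1/2. -/
theorem stmt_1 (θstar αstar : ℝ) (hθ : 0 < θstar) (hα : 1/2 < αstar) (hα1 : αstar < 1)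
    (q : ℝ → ℝ)
    (hq : ∀ y, q y = αstar * ((Real.sqrt (2 * Real.pi))⁻¹ * Real.exp (-((y - θstar) ^ 2) / 2))
        + (1 - αstar) * ((Real.sqrt (2 * Real.pi))⁻¹ * Real.exp (-((y + θstar) ^ 2) / 2)))
    (G : ℝ → ℝ → ℝ)
    (hG : ∀ θ α, G θ α = ∫ y, (α * Real.exp (θ * y) /
        (α * Real.exp (θ * y) + (1 - α) * Real.exp (-(θ * y)))) * q y)
    (hmono : ∀ θ, StrictMonoOn (G θ) (Set.Icc (0:ℝ) 1)) :
    ∀ θ : ℝ, G θ (1/2) < αstar ∧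
      ∀ α ∈ Set.Ioo (0:ℝ) 1, G θ α = αstar → 1/2 < α :=
  stmt_1_general θstar αstar hα q hq G hG hmono
end

section
/- With q^{θ*} the two-Gaussian mixture density (weights α* > 1/2, means ±θ*, unit variance), define F(θ,α) = ∫ y · (α e^{θy} - (1-α) e^{-θy}) / (α e^{θy} + (1-α) e^{-θy}) · q^{θ*}(y) dy. Then ∂F/∂θ (θ,α) = 4α(1-α) ∫ y² q^{θ*}(y) / (α e^{θy} + (1-α) e^{-θy})² dy ≥ 0 for all θ ∈ ℝ and α ∈ (0,1); i.e., F is nondecreasing in θ. -/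
/-!
The integrand of `F(·, α)` is `y · (N/D)(θ y) · q(y)` with `N(s) = α eˢ - (1-α) e⁻ˢ` and
`D(s) = α eˢ + (1-α) e⁻ˢ`. Since `N' = D`, `D' = N` and `D² - N² = 4α(1-α)`, we get
`(N/D)' = 4α(1-α) / D² ≤ 1`, so the `θ`-derivative of the integrand is dominated by `y² q(y)`,
uniformly in `θ`. This is integrable for a Gaussian mixture, so `F` may be differentiated under
the integral sign, and the resulting integrand is nonnegative.
-/

open MeasureTheory Real

/-- At `s = θ y`, `α eˢ / emDenom α s` is the posterior weight of the component centred at `+θ`,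
so `emNumer α s / emDenom α s` is twice that weight minus one. -/
noncomputable def emNumer (α s : ℝ) : ℝ := α * exp s - (1 - α) * exp (-s)

noncomputable def emDenom (α s : ℝ) : ℝ := α * exp s + (1 - α) * exp (-s)

section EMRatio

variable {α : ℝ}

theorem hasDerivAt_emNumer (α s : ℝ) : HasDerivAt (emNumer α) (emDenom α s) s := by
  have h := ((hasDerivAt_exp s).const_mul α).sub (((hasDerivAt_neg s).exp).const_mul (1 - α))
  exact h.congr_deriv (by unfold emDenom; ring)

theorem hasDerivAt_emDenom (α s : ℝ) : HasDerivAt (emDenom α) (emNumer α s) s := by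
  have h := ((hasDerivAt_exp s).const_mul α).add (((hasDerivAt_neg s).exp).const_mul (1 - α))
  exact h.congr_deriv (by unfold emNumer; ring)

theorem emDenom_sq_sub_emNumer_sq (α s : ℝ) :
    emDenom α s ^ 2 - emNumer α s ^ 2 = 4 * α * (1 - α) := by
  have h : exp s * exp (-s) = 1 := by rw [← exp_add, add_neg_cancel, exp_zero]
  simp only [emDenom, emNumer]
  linear_combination 4 * α * (1 - α) * h

theorem four_mul_mul_one_sub_le_emDenom_sq (α s : ℝ) : 4 * α * (1 - α) ≤ emDenom α s ^ 2 := by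
  nlinarith [emDenom_sq_sub_emNumer_sq α s, sq_nonneg (emNumer α s)]

theorem emDenom_pos (hα0 : 0 ≤ α) (hα1 : α ≤ 1) (s : ℝ) : 0 < emDenom α s := by
  unfold emDenom
  rcases hα0.eq_or_lt with rfl | hα0
  · simpa using exp_pos (-s)
  · exact add_pos_of_pos_of_nonneg (mul_pos hα0 (exp_pos s)) (by nlinarith [exp_pos (-s)])

theorem abs_emNumer_le_emDenom (hα0 : 0 ≤ α) (hα1 : α ≤ 1) (s : ℝ) :
    |emNumer α s| ≤ emDenom α s := by
  refine abs_le_of_sq_le_sq ?_ (emDenom_pos hα0 hα1 s).le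
  nlinarith [emDenom_sq_sub_emNumer_sq α s]

theorem hasDerivAt_emNumer_div_emDenom {s : ℝ} (hD : emDenom α s ≠ 0) :
    HasDerivAt (fun s => emNumer α s / emDenom α s) (4 * α * (1 - α) / emDenom α s ^ 2) s := by
  refine ((hasDerivAt_emNumer α s).div (hasDerivAt_emDenom α s) hD).congr_deriv ?_
  rw [← emDenom_sq_sub_emNumer_sq α s]
  ring

end EMRatio

section EMMap

variable {α : ℝ} {q : ℝ → ℝ}

theorem hasDerivAt_emIntegrand (hα0 : 0 ≤ α) (hα1 : α ≤ 1) (t y : ℝ) :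
    HasDerivAt (fun t => y * (emNumer α (t * y) / emDenom α (t * y)) * q y)
      (4 * α * (1 - α) * (y ^ 2 * q y / emDenom α (t * y) ^ 2)) t := by
  have h := (hasDerivAt_emNumer_div_emDenom (emDenom_pos hα0 hα1 (t * y)).ne').comp t
    ((hasDerivAt_id t).mul_const y)
  refine ((h.const_mul y).mul_const (q y)).congr_deriv ?_
  ring

theorem norm_emIntegrand_le (hα0 : 0 ≤ α) (hα1 : α ≤ 1) (t y : ℝ) :
    ‖y * (emNumer α (t * y) / emDenom α (t * y)) * q y‖ ≤ ‖q y‖ + ‖y ^ 2 * q y‖ := by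
  have hD := emDenom_pos hα0 hα1 (t * y)
  have hr : |emNumer α (t * y) / emDenom α (t * y)| ≤ 1 := by
    rw [abs_div, abs_of_pos hD, div_le_one hD]
    exact abs_emNumer_le_emDenom hα0 hα1 _
  have hy : |y| ≤ 1 + y ^ 2 := by nlinarith [sq_nonneg (|y| - 1), sq_abs y]
  simp only [norm_mul, norm_pow, Real.norm_eq_abs, sq_abs]
  calc |y| * |emNumer α (t * y) / emDenom α (t * y)| * |q y| ≤ (1 + y ^ 2) * 1 * |q y| := by
        gcongr
    _ = |q y| + y ^ 2 * |q y| := by ring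

theorem norm_emIntegrand_deriv_le (hα0 : 0 ≤ α) (hα1 : α ≤ 1) (t y : ℝ) :
    ‖4 * α * (1 - α) * (y ^ 2 * q y / emDenom α (t * y) ^ 2)‖ ≤ ‖y ^ 2 * q y‖ := by
  have hD2 : 0 < emDenom α (t * y) ^ 2 := pow_pos (emDenom_pos hα0 hα1 _) 2
  have hc : 0 ≤ 4 * α * (1 - α) := by nlinarith
  rw [mul_div_assoc', norm_div, norm_mul, Real.norm_of_nonneg hc, Real.norm_of_nonneg hD2.le,
    div_le_iff₀ hD2, mul_comm]
  exact mul_le_mul_of_nonneg_left (four_mul_mul_one_sub_le_emDenom_sq α _) (norm_nonneg _)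

theorem hasDerivAt_emMap (hq : Integrable q) (hq2 : Integrable fun y => y ^ 2 * q y)
    (hα0 : 0 ≤ α) (hα1 : α ≤ 1) (θ : ℝ) :
    HasDerivAt (fun t => ∫ y, y * (emNumer α (t * y) / emDenom α (t * y)) * q y)
      (4 * α * (1 - α) * ∫ y, y ^ 2 * q y / emDenom α (θ * y) ^ 2) θ := by
  have hmeas (t : ℝ) :
      AEStronglyMeasurable fun y => y * (emNumer α (t * y) / emDenom α (t * y)) * q y := by
    have : Measurable fun y => y * (emNumer α (t * y) / emDenom α (t * y)) := by
      unfold emNumer emDenom; fun_prop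
    exact this.aestronglyMeasurable.mul hq.aestronglyMeasurable
  have hmeas' : AEStronglyMeasurable
      fun y => 4 * α * (1 - α) * (y ^ 2 * q y / emDenom α (θ * y) ^ 2) := by
    have : Measurable fun y => emDenom α (θ * y) ^ 2 := by unfold emDenom; fun_prop
    exact (hq2.aestronglyMeasurable.div₀ this.aestronglyMeasurable).const_mul _
  have hint : Integrable fun y => y * (emNumer α (θ * y) / emDenom α (θ * y)) * q y :=
    (hq.norm.add hq2.norm).mono' (hmeas θ) (.of_forall (norm_emIntegrand_le hα0 hα1 θ))
  rw [← integral_const_mul]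
  exact (hasDerivAt_integral_of_dominated_loc_of_deriv_le
    (F' := fun t y => 4 * α * (1 - α) * (y ^ 2 * q y / emDenom α (t * y) ^ 2))
    Filter.univ_mem (.of_forall hmeas) hint hmeas'
    (.of_forall fun y t _ => norm_emIntegrand_deriv_le hα0 hα1 t y) hq2.norm
    (.of_forall fun y t _ => hasDerivAt_emIntegrand hα0 hα1 t y)).2

theorem emMap_deriv_nonneg (hq : ∀ y, 0 ≤ q y) (hα0 : 0 ≤ α) (hα1 : α ≤ 1) (θ : ℝ) :
    0 ≤ 4 * α * (1 - α) * ∫ y, y ^ 2 * q y / emDenom α (θ * y) ^ 2 := by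
  have hc : 0 ≤ 4 * α * (1 - α) := by nlinarith
  exact mul_nonneg hc (integral_nonneg fun y => by have := hq y; positivity)

end EMMap

section GaussianMixture

noncomputable def stdGaussianPDF (x : ℝ) : ℝ := (√(2 * π))⁻¹ * exp (-(x ^ 2) / 2)

noncomputable def gaussMixturePDF (a c y : ℝ) : ℝ :=
  a * stdGaussianPDF (y - c) + (1 - a) * stdGaussianPDF (y + c)

theorem stdGaussianPDF_nonneg (x : ℝ) : 0 ≤ stdGaussianPDF x := by
  unfold stdGaussianPDF
  positivity

theorem integrable_pow_mul_stdGaussianPDF (n : ℕ) :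
    Integrable fun x => x ^ n * stdGaussianPDF x := by
  have h := (integrable_rpow_mul_exp_neg_mul_sq (b := 1 / 2) (by norm_num) (s := n)
    (by linarith [n.cast_nonneg (α := ℝ)])).const_mul (√(2 * π))⁻¹
  refine h.congr (.of_forall fun x => ?_)
  simp only [stdGaussianPDF, rpow_natCast]
  ring_nf

theorem integrable_stdGaussianPDF_sub (c : ℝ) : Integrable fun y => stdGaussianPDF (y - c) := by
  simpa using (integrable_pow_mul_stdGaussianPDF 0).comp_sub_right c

theorem integrable_sq_mul_stdGaussianPDF_sub (c : ℝ) :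
    Integrable fun y => y ^ 2 * stdGaussianPDF (y - c) := by
  have h := ((integrable_pow_mul_stdGaussianPDF 2).add
    ((integrable_pow_mul_stdGaussianPDF 1).const_mul (2 * c))).add
    ((integrable_pow_mul_stdGaussianPDF 0).const_mul (c ^ 2))
  refine (h.comp_sub_right c).congr (.of_forall fun y => ?_)
  simp only [Pi.add_apply]
  ring

variable {a : ℝ}

theorem gaussMixturePDF_nonneg (ha0 : 0 ≤ a) (ha1 : a ≤ 1) (c y : ℝ) :
    0 ≤ gaussMixturePDF a c y := by
  have := stdGaussianPDF_nonneg (y - c)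
  have := stdGaussianPDF_nonneg (y + c)
  unfold gaussMixturePDF
  exact add_nonneg (by positivity) (mul_nonneg (by linarith) (by positivity))

theorem integrable_gaussMixturePDF (a c : ℝ) : Integrable (gaussMixturePDF a c) := by
  refine ((integrable_stdGaussianPDF_sub c).const_mul a).add
    (((integrable_stdGaussianPDF_sub (-c)).const_mul (1 - a)).congr (.of_forall fun y => ?_))
  simp [sub_neg_eq_add]

theorem integrable_sq_mul_gaussMixturePDF (a c : ℝ) :
    Integrable fun y => y ^ 2 * gaussMixturePDF a c y := by
  refine (((integrable_sq_mul_stdGaussianPDF_sub c).const_mul a).add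
    ((integrable_sq_mul_stdGaussianPDF_sub (-c)).const_mul (1 - a))).congr (.of_forall fun y => ?_)
  simp only [Pi.add_apply, gaussMixturePDF, sub_neg_eq_add]
  ring

end GaussianMixture

theorem stmt_2_general (θstar αstar : ℝ) (hα : 1/2 < αstar) (hα1 : αstar < 1)
    (q : ℝ → ℝ)
    (hq : ∀ y, q y = αstar * ((Real.sqrt (2 * Real.pi))⁻¹ * Real.exp (-((y - θstar) ^ 2) / 2))
        + (1 - αstar) * ((Real.sqrt (2 * Real.pi))⁻¹ * Real.exp (-((y + θstar) ^ 2) / 2)))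
    (F : ℝ → ℝ → ℝ)
    (hF : ∀ θ α, F θ α = ∫ y, y * ((α * Real.exp (θ * y) - (1 - α) * Real.exp (-(θ * y))) /
        (α * Real.exp (θ * y) + (1 - α) * Real.exp (-(θ * y)))) * q y) :
    ∀ α ∈ Set.Ioo (0:ℝ) 1, (∀ θ : ℝ,
      HasDerivAt (fun t : ℝ => F t α)
        (4 * α * (1 - α) * ∫ y, y ^ 2 * q y /
          (α * Real.exp (θ * y) + (1 - α) * Real.exp (-(θ * y))) ^ 2) θ ∧
      0 ≤ 4 * α * (1 - α) * ∫ y, y ^ 2 * q y /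
          (α * Real.exp (θ * y) + (1 - α) * Real.exp (-(θ * y))) ^ 2) ∧
    Monotone (fun t : ℝ => F t α) := by
  obtain rfl : q = gaussMixturePDF αstar θstar := funext hq
  rintro α ⟨hα0, hα1'⟩
  have hFα : (fun t => F t α) =
      fun t => ∫ y, y * (emNumer α (t * y) / emDenom α (t * y)) * gaussMixturePDF αstar θstar y :=
    funext fun t => hF t α
  have hderiv := hasDerivAt_emMap (integrable_gaussMixturePDF αstar θstar)
    (integrable_sq_mul_gaussMixturePDF αstar θstar) hα0.le hα1'.le
  have hnonneg := emMap_deriv_nonneg (gaussMixturePDF_nonneg (by linarith) hα1.le θstar)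
    hα0.le hα1'.le
  rw [hFα]
  exact ⟨fun θ => ⟨hderiv θ, hnonneg θ⟩, monotone_of_hasDerivAt_nonneg hderiv hnonneg⟩

/-- For the two-Gaussian mixture q^{θ*}, the EM update map
F(θ,α) = ∫ y (α e^{θy} - (1-α)e^{-θy})/(α e^{θy} + (1-α)e^{-θy}) q^{θ*}(y) dy has
∂F/∂θ (θ,α) = 4α(1-α) ∫ y² q^{θ*}(y)/(α e^{θy}+(1-α)e^{-θy})² dy ≥ 0 for all θ ∈ ℝ
and α ∈ (0,1); i.e., F is nondecreasing in θ. -/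
theorem stmt_2 (θstar αstar : ℝ) (hθ : 0 < θstar) (hα : 1/2 < αstar) (hα1 : αstar < 1)
    (q : ℝ → ℝ)
    (hq : ∀ y, q y = αstar * ((Real.sqrt (2 * Real.pi))⁻¹ * Real.exp (-((y - θstar) ^ 2) / 2))
        + (1 - αstar) * ((Real.sqrt (2 * Real.pi))⁻¹ * Real.exp (-((y + θstar) ^ 2) / 2)))
    (F : ℝ → ℝ → ℝ)
    (hF : ∀ θ α, F θ α = ∫ y, y * ((α * Real.exp (θ * y) - (1 - α) * Real.exp (-(θ * y))) /
        (α * Real.exp (θ * y) + (1 - α) * Real.exp (-(θ * y)))) * q y) :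
    ∀ α ∈ Set.Ioo (0:ℝ) 1, (∀ θ : ℝ,
      HasDerivAt (fun t : ℝ => F t α)
        (4 * α * (1 - α) * ∫ y, y ^ 2 * q y /
          (α * Real.exp (θ * y) + (1 - α) * Real.exp (-(θ * y))) ^ 2) θ ∧
      0 ≤ 4 * α * (1 - α) * ∫ y, y ^ 2 * q y /
          (α * Real.exp (θ * y) + (1 - α) * Real.exp (-(θ * y))) ^ 2) ∧
    Monotone (fun t : ℝ => F t α) :=
  stmt_2_general θstar αstar hα hα1 q hq F hF
end

section
/- Let α* ∈ (1/2,1), θ* > 0 and q^{θ*} the corresponding two-Gaussian mixture. If α, α* ≥ 1/2, α ≤ α*, and 0 ≤ θ ≤ θ*, then for the density-like function ρ_{θ,α}(y) = (α* e^{θ* y} + (1-α*) e^{-θ* y}) / [(e^{θy} + e^{-θy})(α e^{θy} + (1-α) e^{-θy})] · φ(y) e^{-θ*²/2}, one has ρ_{θ,α}(y) ≥ ρ_{θ,α}(-y) for all y ≥ 0; consequently ∫ y ρ_{θ,α}(y) dy ≥ 0, which yields F(θ,α) ≥ F(θ,1/2) whenever α ≥ 1/2. -/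
/-!
Write `m_β(t) = β eᵗ + (1 - β) e⁻ᵗ`. Up to an even positive factor, `ρ(y)` is
`m_{α*}(θ* y) / m_α(θ y)`, and the cross-multiplied comparison of `ρ(y)` with `ρ(-y)` is the identity
`m_{α*}(s) m_α(-t) - m_{α*}(-s) m_α(t) = 2 ((α* + α - 1) sinh (s - t) + (α* - α) sinh (s + t))`,
whose right side is nonnegative for `0 ≤ t ≤ s`. Pairing `y` with `-y` then gives `∫ y ρ(y) ≥ 0`.
Finally, the integrand of `F(θ, α) - F(θ, 1/2)` is exactly `2 (2α - 1) y ρ(y)`, because the difference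
of the posterior means `(β eᵗ - (1 - β) e⁻ᵗ) / m_β(t)` at `β = α` and `β = 1/2` is
`2 (2α - 1) / ((eᵗ + e⁻ᵗ) m_α(t))`, while `q(y) = φ(y) e^{-θ*²/2} m_{α*}(θ* y)`.
-/

open MeasureTheory Real

noncomputable section

def expMix (β t : ℝ) : ℝ := β * exp t + (1 - β) * exp (-t)

def mixRatio (β t : ℝ) : ℝ := (β * exp t - (1 - β) * exp (-t)) / expMix β t

lemma expMix_pos {β : ℝ} (h0 : 0 ≤ β) (h1 : β < 1) (t : ℝ) : 0 < expMix β t := by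
  have h1' := sub_pos.2 h1
  unfold expMix
  positivity

lemma expMix_mul_expMix_neg_sub (β γ s t : ℝ) :
    expMix β s * expMix γ (-t) - expMix β (-s) * expMix γ t
      = 2 * ((β + γ - 1) * sinh (s - t) + (β - γ) * sinh (s + t)) := by
  simp only [expMix, sinh_eq, neg_neg, neg_sub, neg_add, exp_sub, exp_add, exp_neg]
  field_simp
  ring

lemma expMix_neg_div_le {β γ s t : ℝ} (hγ : 1 / 2 ≤ γ) (hγβ : γ ≤ β) (hβ : β < 1)
    (ht : 0 ≤ t) (hts : t ≤ s) :
    expMix β (-s) / expMix γ (-t) ≤ expMix β s / expMix γ t := by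
  have hγ0 : 0 ≤ γ := by linarith
  rw [div_le_div_iff₀ (expMix_pos hγ0 (by linarith) _) (expMix_pos hγ0 (by linarith) _),
    ← sub_nonneg, expMix_mul_expMix_neg_sub]
  have h₁ : 0 ≤ sinh (s - t) := sinh_nonneg_iff.2 (by linarith)
  have h₂ : 0 ≤ sinh (s + t) := sinh_nonneg_iff.2 (by linarith)
  have h₃ : 0 ≤ β + γ - 1 := by linarith
  have h₄ : 0 ≤ β - γ := by linarith
  positivity

lemma abs_mixRatio_le_one {β : ℝ} (h0 : 0 ≤ β) (h1 : β < 1) (t : ℝ) : |mixRatio β t| ≤ 1 := by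
  have hpos := expMix_pos h0 h1 t
  have h1' := sub_pos.2 h1
  rw [mixRatio, abs_div, abs_of_pos hpos, div_le_one hpos, abs_sub_le_iff, expMix]
  constructor <;> nlinarith [exp_pos t, exp_pos (-t)]

lemma mixRatio_sub_mixRatio_half {β : ℝ} (h0 : 0 ≤ β) (h1 : β < 1) (t : ℝ) :
    mixRatio β t - mixRatio (1 / 2) t = 2 * (2 * β - 1) / ((exp t + exp (-t)) * expMix β t) := by
  have hβ := (expMix_pos h0 h1 t).ne'
  have hhalf := (expMix_pos (β := 1 / 2) (by norm_num) (by norm_num) t).ne'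
  have hsum : exp t + exp (-t) ≠ 0 := by positivity
  rw [mixRatio, mixRatio, div_sub_div _ _ hβ hhalf, div_eq_div_iff (mul_ne_zero hβ hhalf)
    (mul_ne_zero hsum hβ)]
  simp only [expMix, exp_neg]
  field_simp
  ring

def gaussMix (a c y : ℝ) : ℝ :=
  a * ((sqrt (2 * π))⁻¹ * exp (-((y - c) ^ 2) / 2))
    + (1 - a) * ((sqrt (2 * π))⁻¹ * exp (-((y + c) ^ 2) / 2))

/-- The paper's `ρ_{θ,α}`, written as `q^{θ*}(y) / ((e^{θy} + e^{-θy}) m_α(θy))`. -/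
def rho (a c β θ y : ℝ) : ℝ :=
  gaussMix a c y / ((exp (θ * y) + exp (-(θ * y))) * expMix β (θ * y))

lemma exp_neg_sq_sub_div_two (y c : ℝ) :
    exp (-((y - c) ^ 2) / 2) = exp (-(y ^ 2) / 2) * exp (-(c ^ 2) / 2) * exp (c * y) := by
  rw [← exp_add, ← exp_add]
  ring_nf

lemma gaussMix_eq_expMix (a c y : ℝ) :
    gaussMix a c y =
      expMix a (c * y) * ((sqrt (2 * π))⁻¹ * exp (-(y ^ 2) / 2) * exp (-(c ^ 2) / 2)) := by
  rw [gaussMix, ← sub_neg_eq_add y c, exp_neg_sq_sub_div_two, exp_neg_sq_sub_div_two, expMix,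
    neg_mul, neg_sq]
  ring

lemma rho_neg_le {a c β θ y : ℝ} (hβ : 1 / 2 ≤ β) (hβa : β ≤ a) (ha : a < 1) (hθ : 0 ≤ θ)
    (hθc : θ ≤ c) (hy : 0 ≤ y) : rho a c β θ (-y) ≤ rho a c β θ y := by
  set w := (sqrt (2 * π))⁻¹ * exp (-(y ^ 2) / 2) * exp (-(c ^ 2) / 2) /
    (exp (θ * y) + exp (-(θ * y)))
  have hw : 0 ≤ w := by positivity
  calc rho a c β θ (-y) = expMix a (-(c * y)) / expMix β (-(θ * y)) * w := by
        simp only [w, rho, gaussMix_eq_expMix, mul_neg, neg_neg, neg_sq, div_eq_mul_inv, mul_inv]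
        ring
    _ ≤ expMix a (c * y) / expMix β (θ * y) * w :=
        mul_le_mul_of_nonneg_right
          (expMix_neg_div_le hβ hβa ha (by positivity) (mul_le_mul_of_nonneg_right hθc hy)) hw
    _ = rho a c β θ y := by
        simp only [w, rho, gaussMix_eq_expMix, div_eq_mul_inv, mul_inv]
        ring

lemma integrable_mul_exp_neg_sq_sub_div_two (c : ℝ) :
    Integrable (fun y : ℝ => y * exp (-((y - c) ^ 2) / 2)) := by
  have h := ((integrable_mul_exp_neg_mul_sq (b := 1 / 2) (by norm_num)).add
    ((integrable_exp_neg_mul_sq (b := 1 / 2) (by norm_num)).const_mul c)).comp_sub_right c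
  refine h.congr (Filter.Eventually.of_forall fun y => ?_)
  simp only [Pi.add_apply]
  ring_nf

lemma integrable_mul_gaussMix (a c : ℝ) : Integrable (fun y => y * gaussMix a c y) := by
  refine (((integrable_mul_exp_neg_sq_sub_div_two c).const_mul (a * (sqrt (2 * π))⁻¹)).add
    ((integrable_mul_exp_neg_sq_sub_div_two (-c)).const_mul
      ((1 - a) * (sqrt (2 * π))⁻¹))).congr (Filter.Eventually.of_forall fun y => ?_)
  simp only [Pi.add_apply, gaussMix, sub_neg_eq_add]
  ring

lemma MeasureTheory.Integrable.mul_mixRatio {f : ℝ → ℝ} (hf : Integrable (fun y => y * f y))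
    {β : ℝ} (h0 : 0 ≤ β) (h1 : β < 1) (θ : ℝ) :
    Integrable (fun y => y * mixRatio β (θ * y) * f y) := by
  have hmeas : Measurable fun y => mixRatio β (θ * y) := by
    unfold mixRatio expMix
    fun_prop
  refine (hf.bdd_mul (c := 1) hmeas.aestronglyMeasurable
    (Filter.Eventually.of_forall fun y => ?_)).congr (Filter.Eventually.of_forall fun y => ?_)
  · exact (Real.norm_eq_abs _).trans_le (abs_mixRatio_le_one h0 h1 _)
  · simp only
    ring

lemma integral_mul_mixRatio_sub_half {f : ℝ → ℝ} (hf : Integrable (fun y => y * f y))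
    {β : ℝ} (h0 : 0 ≤ β) (h1 : β < 1) (θ : ℝ) :
    (∫ y, y * mixRatio β (θ * y) * f y) - ∫ y, y * mixRatio (1 / 2) (θ * y) * f y
      = 2 * (2 * β - 1) *
        ∫ y, y * (f y / ((exp (θ * y) + exp (-(θ * y))) * expMix β (θ * y))) := by
  rw [← integral_sub (hf.mul_mixRatio h0 h1 θ) (hf.mul_mixRatio (by norm_num) (by norm_num) θ),
    ← integral_const_mul]
  refine integral_congr_ae (Filter.Eventually.of_forall fun y => ?_)
  simp only
  rw [← sub_mul, ← mul_sub, mixRatio_sub_mixRatio_half h0 h1]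
  ring

lemma integral_mul_nonneg_of_neg_le {f : ℝ → ℝ} (hf : ∀ y, 0 ≤ y → f (-y) ≤ f y) :
    0 ≤ ∫ y, y * f y := by
  by_cases hint : Integrable (fun y => y * f y)
  · have hpair : ∀ y, 0 ≤ y * f y + -y * f (-y) := fun y => by
      rcases le_total 0 y with hy | hy
      · nlinarith [hf y hy]
      · nlinarith [neg_neg y ▸ hf (-y) (neg_nonneg.2 hy)]
    have hsum : 0 ≤ ∫ y, (y * f y + -y * f (-y)) := integral_nonneg hpair
    rw [integral_add hint hint.comp_neg, integral_neg_eq_self (fun y => y * f y)] at hsum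
    linarith
  · rw [integral_undef hint]

end

theorem stmt_4_general (θstar αstar : ℝ) (hαstar1 : αstar < 1)
    (q : ℝ → ℝ)
    (hq : ∀ y, q y = αstar * ((Real.sqrt (2 * Real.pi))⁻¹ * Real.exp (-((y - θstar) ^ 2) / 2))
        + (1 - αstar) * ((Real.sqrt (2 * Real.pi))⁻¹ * Real.exp (-((y + θstar) ^ 2) / 2)))
    (F : ℝ → ℝ → ℝ)
    (hF : ∀ θ α, F θ α = ∫ y, y * ((α * Real.exp (θ * y) - (1 - α) * Real.exp (-(θ * y))) /
        (α * Real.exp (θ * y) + (1 - α) * Real.exp (-(θ * y)))) * q y)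
    (α θ : ℝ) (hα : 1/2 ≤ α) (hαα : α ≤ αstar) (hθ0 : 0 ≤ θ) (hθθ : θ ≤ θstar)
    (ρ : ℝ → ℝ)
    (hρ : ∀ y, ρ y = (αstar * Real.exp (θstar * y) + (1 - αstar) * Real.exp (-(θstar * y))) /
        ((Real.exp (θ * y) + Real.exp (-(θ * y))) *
          (α * Real.exp (θ * y) + (1 - α) * Real.exp (-(θ * y)))) *
        ((Real.sqrt (2 * Real.pi))⁻¹ * Real.exp (-(y ^ 2) / 2)) *
        Real.exp (-(θstar ^ 2) / 2)) :
    (∀ y : ℝ, 0 ≤ y → ρ (-y) ≤ ρ y) ∧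
    0 ≤ ∫ y, y * ρ y ∧
    F θ (1/2) ≤ F θ α := by
  obtain rfl : q = gaussMix αstar θstar := funext hq
  obtain rfl : ρ = rho αstar θstar α θ := funext fun y => by
    rw [hρ, rho, gaussMix_eq_expMix, expMix, expMix]
    ring
  have hsymm := fun y (hy : 0 ≤ y) => rho_neg_le hα hαα hαstar1 hθ0 hθθ hy
  have hmoment := integral_mul_nonneg_of_neg_le hsymm
  have hdiff : F θ α - F θ (1/2) = 2 * (2 * α - 1) * ∫ y, y * rho αstar θstar α θ y := by
    rw [hF, hF]
    exact integral_mul_mixRatio_sub_half (integrable_mul_gaussMix αstar θstar) (by linarith)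
      (hαα.trans_lt hαstar1) θ
  refine ⟨hsymm, hmoment, ?_⟩
  have := mul_nonneg (by linarith : (0 : ℝ) ≤ 2 * (2 * α - 1)) hmoment
  linarith

/-- If 1/2 ≤ α ≤ α* < 1 and 0 ≤ θ ≤ θ*, then
ρ_{θ,α}(y) ≥ ρ_{θ,α}(-y) for all y ≥ 0, hence ∫ y ρ_{θ,α}(y) dy ≥ 0, which yields
F(θ,α) ≥ F(θ,1/2). -/
theorem stmt_4 (θstar αstar : ℝ) (hθstar : 0 < θstar) (hαstar : 1/2 ≤ αstar) (hαstar1 : αstar < 1)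
    (q : ℝ → ℝ)
    (hq : ∀ y, q y = αstar * ((Real.sqrt (2 * Real.pi))⁻¹ * Real.exp (-((y - θstar) ^ 2) / 2))
        + (1 - αstar) * ((Real.sqrt (2 * Real.pi))⁻¹ * Real.exp (-((y + θstar) ^ 2) / 2)))
    (F : ℝ → ℝ → ℝ)
    (hF : ∀ θ α, F θ α = ∫ y, y * ((α * Real.exp (θ * y) - (1 - α) * Real.exp (-(θ * y))) /
        (α * Real.exp (θ * y) + (1 - α) * Real.exp (-(θ * y)))) * q y)
    (α θ : ℝ) (hα : 1/2 ≤ α) (hαα : α ≤ αstar) (hθ0 : 0 ≤ θ) (hθθ : θ ≤ θstar)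
    (ρ : ℝ → ℝ)
    (hρ : ∀ y, ρ y = (αstar * Real.exp (θstar * y) + (1 - αstar) * Real.exp (-(θstar * y))) /
        ((Real.exp (θ * y) + Real.exp (-(θ * y))) *
          (α * Real.exp (θ * y) + (1 - α) * Real.exp (-(θ * y)))) *
        ((Real.sqrt (2 * Real.pi))⁻¹ * Real.exp (-(y ^ 2) / 2)) *
        Real.exp (-(θstar ^ 2) / 2)) :
    (∀ y : ℝ, 0 ≤ y → ρ (-y) ≤ ρ y) ∧
    0 ≤ ∫ y, y * ρ y ∧
    F θ (1/2) ≤ F θ α :=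
  stmt_4_general θstar αstar hαstar1 q hq F hF α θ hα hαα hθ0 hθθ ρ hρ
end

section
/- For the symmetric balanced mixture: if θ*, θ⁰ > 0 and the iterates are defined by θ^{t+1} = ∫ y tanh(θ^t y) q₀(y) dy where q₀(y) = ½φ(y-θ*) + ½φ(y+θ*), then |θ^t - θ*| ≤ ρ^t |θ⁰ - θ*| with ρ = exp(-min{θ⁰, θ*}²/2). -/
/-!
Write `a = θ*`. The mixture density is `q(y) = e^{-a²/2} cosh(ay) φ(y)`, so
`y tanh(ay) q(y) = e^{-a²/2} y sinh(ay) φ(y)`, whose integral is `a` by exponential tilting: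
`a` is a fixed point of the EM update `M`. Subtracting, and using
`sinh x - tanh y cosh x = sinh(x - y) / cosh y`,
`a - M(θ) = e^{-a²/2} ∫ y sinh((a - θ)y) / cosh(θy) φ(y) dy`, an integral with the sign of `a - θ`.
For `θ ≤ a`, dropping `1 / cosh(θy)` and integrating `y sinh(uy) φ(y)` exactly gives
`a - M(θ) ≤ e^{-θ²/2 - θ(a - θ)} (a - θ) ≤ e^{-θ²/2} (a - θ)`. For `a ≤ θ`, the bound
`|tanh x| ≤ |x|` and `∫ y² φ = 1` give `M(θ) - a ≤ e^{-a²/2} (θ - a)`. In both cases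
`M(θ) ≥ min(θ, a)`, so the iterates never drop below `min(θ⁰, θ*)` and contract at rate `ρ`.
-/

open MeasureTheory ProbabilityTheory Real Set
open scoped NNReal

theorem dist_iterate_le_pow_mul {X : Type*} [PseudoMetricSpace X] {f : X → X} {s : Set X}
    {a : X} {ρ : ℝ} (hρ : 0 ≤ ρ) (hs : MapsTo f s s)
    (hf : ∀ x ∈ s, dist (f x) a ≤ ρ * dist x a) {x : X} (hx : x ∈ s) (t : ℕ) :
    dist (f^[t] x) a ≤ ρ ^ t * dist x a := by
  induction t with
  | zero => simp
  | succ t ih =>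
    rw [Function.iterate_succ_apply', pow_succ', mul_assoc]
    exact (hf _ (hs.iterate t hx)).trans (mul_le_mul_of_nonneg_left ih hρ)

namespace Real

@[fun_prop]
lemma continuous_tanh : Continuous tanh :=
  (continuous_sinh.div continuous_cosh fun x ↦ (cosh_pos x).ne').congr fun x ↦
    (tanh_eq_sinh_div_cosh x).symm

lemma sinh_sub_tanh_mul_cosh (x y : ℝ) : sinh x - tanh y * cosh x = sinh (x - y) / cosh y := by
  rw [tanh_eq_sinh_div_cosh, sinh_sub]
  field_simp

lemma mul_sinh_mul_nonneg {u : ℝ} (hu : 0 ≤ u) (x : ℝ) : 0 ≤ x * sinh (u * x) := by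
  rcases le_total 0 x with hx | hx
  · exact mul_nonneg hx (sinh_nonneg_iff.2 (mul_nonneg hu hx))
  · exact mul_nonneg_of_nonpos_of_nonpos hx
      (sinh_nonpos_iff.2 (mul_nonpos_of_nonneg_of_nonpos hu hx))

lemma sinh_le_mul_cosh {x : ℝ} (hx : 0 ≤ x) : sinh x ≤ x * cosh x := by
  have hderiv (t : ℝ) : HasDerivAt (fun t ↦ t * cosh t - sinh t) (t * sinh t) t := by
    have h := ((hasDerivAt_id t).mul (hasDerivAt_cosh t)).sub (hasDerivAt_sinh t)
    rwa [id, one_mul, add_sub_cancel_left] at h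
  have hmono : Monotone (fun t ↦ t * cosh t - sinh t) :=
    monotone_of_deriv_nonneg (fun t ↦ (hderiv t).differentiableAt) fun t ↦ by
      simpa [(hderiv t).deriv] using mul_sinh_mul_nonneg zero_le_one t
  simpa using hmono hx

lemma abs_tanh_le_abs (x : ℝ) : |tanh x| ≤ |x| := by
  rw [tanh_eq_sinh_div_cosh, abs_div, abs_of_pos (cosh_pos x), div_le_iff₀ (cosh_pos x), abs_sinh,
    ← cosh_abs]
  exact sinh_le_mul_cosh (abs_nonneg x)

lemma mul_sinh_mul_div_cosh_le {v θ : ℝ} (hv : 0 ≤ v) (hvθ : v ≤ θ) (x : ℝ) :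
    x * sinh (v * x) / cosh (θ * x) ≤ v * x ^ 2 := by
  have hcosh : cosh (v * x) ≤ cosh (θ * x) := by
    rw [cosh_le_cosh, abs_mul, abs_mul, abs_of_nonneg hv, abs_of_nonneg (hv.trans hvθ)]
    gcongr
  calc x * sinh (v * x) / cosh (θ * x) ≤ x * sinh (v * x) / cosh (v * x) :=
        div_le_div_of_nonneg_left (mul_sinh_mul_nonneg hv x) (cosh_pos _) hcosh
    _ = x * tanh (v * x) := by rw [tanh_eq_sinh_div_cosh, mul_div_assoc]
    _ ≤ |x| * |tanh (v * x)| := abs_mul x _ ▸ le_abs_self _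
    _ ≤ |x| * |v * x| := mul_le_mul_of_nonneg_left (abs_tanh_le_abs _) (abs_nonneg x)
    _ = v * x ^ 2 := by rw [abs_mul, abs_of_nonneg hv, ← sq_abs x]; ring

end Real

namespace ProbabilityTheory

variable {μ : ℝ} {v : ℝ≥0}

lemma integrable_gaussianReal_iff (hv : v ≠ 0) {f : ℝ → ℝ} :
    Integrable f (gaussianReal μ v) ↔ Integrable (fun x ↦ f x * gaussianPDFReal μ v x) := by
  rw [gaussianReal_of_var_ne_zero _ hv, integrable_withDensity_iff_integrable_smul'
    (measurable_gaussianPDF _ _) (ae_of_all _ fun _ ↦ gaussianPDF_lt_top)]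
  simp only [toReal_gaussianPDF, smul_eq_mul, mul_comm]

lemma integral_gaussianReal_eq_integral_mul (hv : v ≠ 0) (f : ℝ → ℝ) :
    ∫ x, f x ∂gaussianReal μ v = ∫ x, f x * gaussianPDFReal μ v x := by
  simp only [integral_gaussianReal_eq_integral_smul hv, smul_eq_mul, mul_comm]

lemma integrable_id_mul_gaussianPDFReal (μ : ℝ) (v : ℝ≥0) :
    Integrable (fun x ↦ x * gaussianPDFReal μ v x) := by
  rcases eq_or_ne v 0 with rfl | hv
  · simp
  · exact (integrable_gaussianReal_iff hv).1 ((memLp_id_gaussianReal 1).integrable le_rfl)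

lemma integrable_sq_mul_gaussianPDFReal (μ : ℝ) (v : ℝ≥0) :
    Integrable (fun x ↦ x ^ 2 * gaussianPDFReal μ v x) := by
  rcases eq_or_ne v 0 with rfl | hv
  · simp
  · exact (integrable_gaussianReal_iff hv).1 (memLp_id_gaussianReal 2).integrable_sq

lemma integral_id_mul_gaussianPDFReal (μ : ℝ) (hv : v ≠ 0) :
    ∫ x, x * gaussianPDFReal μ v x = μ := by
  rw [← integral_gaussianReal_eq_integral_mul hv, integral_id_gaussianReal]

lemma integral_sq_mul_gaussianPDFReal (v : ℝ≥0) :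
    ∫ x, x ^ 2 * gaussianPDFReal 0 v x = v := by
  rcases eq_or_ne v 0 with rfl | hv
  · simp
  · rw [← integral_gaussianReal_eq_integral_mul hv, ← variance_of_integral_eq_zero
      measurable_id'.aemeasurable integral_id_gaussianReal, variance_fun_id_gaussianReal]

lemma gaussianPDFReal_one_apply (μ x : ℝ) :
    gaussianPDFReal μ 1 x = (√(2 * π))⁻¹ * exp (-(x - μ) ^ 2 / 2) := by
  simp [gaussianPDFReal]

end ProbabilityTheory

local notation "φ" => gaussianPDFReal 0 1

section StandardGaussian

lemma exp_mul_mul_gaussianPDFReal (u x : ℝ) :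
    exp (u * x) * φ x = exp (u ^ 2 / 2) * gaussianPDFReal u 1 x := by
  rw [gaussianPDFReal_one_apply, gaussianPDFReal_one_apply, mul_left_comm, ← exp_add,
    mul_left_comm, ← exp_add]
  ring_nf

lemma integrable_mul_exp_mul_gaussianPDFReal (u : ℝ) :
    Integrable (fun x ↦ x * exp (u * x) * φ x) := by
  simp_rw [mul_assoc, exp_mul_mul_gaussianPDFReal, mul_left_comm _ (rexp _)]
  exact (integrable_id_mul_gaussianPDFReal u 1).const_mul _

lemma integral_mul_exp_mul_gaussianPDFReal (u : ℝ) :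
    ∫ x, x * exp (u * x) * φ x = exp (u ^ 2 / 2) * u := by
  simp_rw [mul_assoc, exp_mul_mul_gaussianPDFReal, mul_left_comm _ (rexp _), integral_const_mul,
    integral_id_mul_gaussianPDFReal u one_ne_zero]

lemma mul_sinh_mul_gaussianPDFReal (u x : ℝ) : x * sinh (u * x) * φ x =
    (x * exp (u * x) * φ x - x * exp (-u * x) * φ x) / 2 := by
  rw [sinh_eq, neg_mul]; ring

lemma mul_cosh_mul_gaussianPDFReal (u x : ℝ) : x * cosh (u * x) * φ x =
    (x * exp (u * x) * φ x + x * exp (-u * x) * φ x) / 2 := by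
  rw [cosh_eq, neg_mul]; ring

lemma integrable_mul_sinh_mul_gaussianPDFReal (u : ℝ) :
    Integrable (fun x ↦ x * sinh (u * x) * φ x) := by
  simp_rw [mul_sinh_mul_gaussianPDFReal]
  exact ((integrable_mul_exp_mul_gaussianPDFReal u).sub
    (integrable_mul_exp_mul_gaussianPDFReal (-u))).div_const 2

lemma integrable_mul_cosh_mul_gaussianPDFReal (u : ℝ) :
    Integrable (fun x ↦ x * cosh (u * x) * φ x) := by
  simp_rw [mul_cosh_mul_gaussianPDFReal]
  exact ((integrable_mul_exp_mul_gaussianPDFReal u).add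
    (integrable_mul_exp_mul_gaussianPDFReal (-u))).div_const 2

lemma integral_mul_sinh_mul_gaussianPDFReal (u : ℝ) :
    ∫ x, x * sinh (u * x) * φ x = u * exp (u ^ 2 / 2) := by
  simp_rw [mul_sinh_mul_gaussianPDFReal]
  rw [integral_div, integral_sub (integrable_mul_exp_mul_gaussianPDFReal u)
    (integrable_mul_exp_mul_gaussianPDFReal (-u)), integral_mul_exp_mul_gaussianPDFReal,
    integral_mul_exp_mul_gaussianPDFReal, neg_sq]
  ring

lemma integrable_mul_sinh_div_cosh_mul_gaussianPDFReal (u θ : ℝ) :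
    Integrable (fun x ↦ x * sinh (u * x) / cosh (θ * x) * φ x) := by
  refine ((integrable_mul_sinh_mul_gaussianPDFReal u).bdd_mul (c := 1)
    (f := fun x ↦ (cosh (θ * x))⁻¹) (by fun_prop) (ae_of_all _ fun x ↦ ?_)).congr
    (ae_of_all _ fun x ↦ by simp only; ring)
  rw [norm_inv, norm_of_nonneg (cosh_pos _).le]
  exact inv_le_one_of_one_le₀ (one_le_cosh _)

lemma integral_mul_sinh_div_cosh_mul_gaussianPDFReal_nonneg {u : ℝ} (hu : 0 ≤ u) (θ : ℝ) :
    0 ≤ ∫ x, x * sinh (u * x) / cosh (θ * x) * φ x :=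
  integral_nonneg fun x ↦ mul_nonneg (div_nonneg (mul_sinh_mul_nonneg hu x) (cosh_pos _).le)
    (gaussianPDFReal_nonneg _ _ _)

lemma integral_mul_sinh_div_cosh_mul_gaussianPDFReal_le {u : ℝ} (hu : 0 ≤ u) (θ : ℝ) :
    ∫ x, x * sinh (u * x) / cosh (θ * x) * φ x ≤ u * exp (u ^ 2 / 2) := by
  rw [← integral_mul_sinh_mul_gaussianPDFReal u]
  refine integral_mono (integrable_mul_sinh_div_cosh_mul_gaussianPDFReal u θ)
    (integrable_mul_sinh_mul_gaussianPDFReal u) fun x ↦ ?_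
  gcongr
  · exact gaussianPDFReal_nonneg _ _ _
  · exact div_le_self (mul_sinh_mul_nonneg hu x) (one_le_cosh _)

lemma integral_mul_sinh_div_cosh_mul_gaussianPDFReal_le_of_le {u θ : ℝ} (hu : 0 ≤ u)
    (huθ : u ≤ θ) : ∫ x, x * sinh (u * x) / cosh (θ * x) * φ x ≤ u := by
  calc ∫ x, x * sinh (u * x) / cosh (θ * x) * φ x ≤ ∫ x, u * (x ^ 2 * φ x) :=
        integral_mono (integrable_mul_sinh_div_cosh_mul_gaussianPDFReal u θ)
          ((integrable_sq_mul_gaussianPDFReal 0 1).const_mul u) fun x ↦ by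
          rw [← mul_assoc]
          exact mul_le_mul_of_nonneg_right (mul_sinh_mul_div_cosh_le hu huθ x)
            (gaussianPDFReal_nonneg _ _ _)
    _ = u := by rw [integral_const_mul, integral_sq_mul_gaussianPDFReal, NNReal.coe_one, mul_one]

end StandardGaussian

noncomputable def balancedMixturePDF (a x : ℝ) : ℝ :=
  2⁻¹ * gaussianPDFReal a 1 x + 2⁻¹ * gaussianPDFReal (-a) 1 x

noncomputable def emUpdate (a θ : ℝ) : ℝ :=
  ∫ x, x * tanh (θ * x) * balancedMixturePDF a x

lemma balancedMixturePDF_eq (a x : ℝ) :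
    balancedMixturePDF a x = exp (-a ^ 2 / 2) * (cosh (a * x) * φ x) := by
  have h₁ := exp_mul_mul_gaussianPDFReal a x
  have h₂ := exp_mul_mul_gaussianPDFReal (-a) x
  have hexp : exp (-a ^ 2 / 2) * exp (a ^ 2 / 2) = 1 := by rw [← exp_add]; simp [neg_div]
  rw [neg_mul, neg_sq] at h₂
  rw [balancedMixturePDF, cosh_eq]
  linear_combination -(exp (-a ^ 2 / 2) / 2) * (h₁ + h₂)
    - (gaussianPDFReal a 1 x + gaussianPDFReal (-a) 1 x) / 2 * hexp

lemma sub_emUpdate (a θ : ℝ) :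
    a - emUpdate a θ = exp (-a ^ 2 / 2) * ∫ x, x * sinh ((a - θ) * x) / cosh (θ * x) * φ x := by
  have hfixed : a = exp (-a ^ 2 / 2) * ∫ x, x * sinh (a * x) * φ x := by
    rw [integral_mul_sinh_mul_gaussianPDFReal, mul_left_comm, ← exp_add]
    simp [neg_div]
  have hupdate : emUpdate a θ = exp (-a ^ 2 / 2) * ∫ x, x * tanh (θ * x) * cosh (a * x) * φ x := by
    rw [emUpdate, ← integral_const_mul]
    congr 1 with x
    rw [balancedMixturePDF_eq]
    ring
  have hint : Integrable (fun x ↦ x * tanh (θ * x) * cosh (a * x) * φ x) :=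
    ((integrable_mul_cosh_mul_gaussianPDFReal a).bdd_mul (c := 1) (f := fun x ↦ tanh (θ * x))
      (by fun_prop) (ae_of_all _ fun x ↦ (abs_tanh_lt_one _).le)).congr
      (ae_of_all _ fun x ↦ by simp only; ring)
  rw [hupdate]
  nth_rw 1 [hfixed]
  rw [← mul_sub, ← integral_sub (integrable_mul_sinh_mul_gaussianPDFReal a) hint]
  congr 2 with x
  rw [sub_mul, mul_div_assoc, ← sinh_sub_tanh_mul_cosh]
  ring

lemma emUpdate_bounds_of_le {a θ : ℝ} (hθ : 0 ≤ θ) (hθa : θ ≤ a) :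
    0 ≤ a - emUpdate a θ ∧ a - emUpdate a θ ≤ exp (-θ ^ 2 / 2) * (a - θ) := by
  have hu : 0 ≤ a - θ := sub_nonneg.2 hθa
  rw [sub_emUpdate]
  refine ⟨mul_nonneg (exp_pos _).le
    (integral_mul_sinh_div_cosh_mul_gaussianPDFReal_nonneg hu θ), ?_⟩
  calc exp (-a ^ 2 / 2) * ∫ x, x * sinh ((a - θ) * x) / cosh (θ * x) * φ x
      ≤ exp (-a ^ 2 / 2) * ((a - θ) * exp ((a - θ) ^ 2 / 2)) :=
        mul_le_mul_of_nonneg_left (integral_mul_sinh_div_cosh_mul_gaussianPDFReal_le hu θ)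
          (exp_pos _).le
    _ = exp (-θ ^ 2 / 2 - θ * (a - θ)) * (a - θ) := by
        rw [mul_left_comm, ← exp_add]; ring_nf
    _ ≤ exp (-θ ^ 2 / 2) * (a - θ) := by
        gcongr
        nlinarith

lemma emUpdate_bounds_of_ge {a θ : ℝ} (ha : 0 ≤ a) (haθ : a ≤ θ) :
    0 ≤ emUpdate a θ - a ∧ emUpdate a θ - a ≤ exp (-a ^ 2 / 2) * (θ - a) := by
  have hv : 0 ≤ θ - a := sub_nonneg.2 haθ
  have hodd : emUpdate a θ - a =
      exp (-a ^ 2 / 2) * ∫ x, x * sinh ((θ - a) * x) / cosh (θ * x) * φ x := by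
    rw [← neg_sub, sub_emUpdate, ← mul_neg, ← integral_neg]
    congr 2 with x
    rw [← neg_sub θ a, neg_mul, sinh_neg]
    ring
  rw [hodd]
  exact ⟨mul_nonneg (exp_pos _).le (integral_mul_sinh_div_cosh_mul_gaussianPDFReal_nonneg hv θ),
    mul_le_mul_of_nonneg_left
      (integral_mul_sinh_div_cosh_mul_gaussianPDFReal_le_of_le hv (by linarith)) (exp_pos _).le⟩

lemma emUpdate_contraction {a θ : ℝ} (ha : 0 ≤ a) (hθ : 0 ≤ θ) :
    min θ a ≤ emUpdate a θ ∧ |emUpdate a θ - a| ≤ exp (-(min θ a) ^ 2 / 2) * |θ - a| := by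
  rcases le_total θ a with hθa | haθ
  · obtain ⟨hnonneg, hle⟩ := emUpdate_bounds_of_le hθ hθa
    have hρ : exp (-θ ^ 2 / 2) ≤ 1 := exp_le_one_iff.2 (by nlinarith)
    rw [min_eq_left hθa, abs_sub_comm, abs_of_nonneg hnonneg, abs_of_nonpos (by linarith)]
    constructor <;> nlinarith
  · obtain ⟨hnonneg, hle⟩ := emUpdate_bounds_of_ge ha haθ
    rw [min_eq_right haθ, abs_of_nonneg hnonneg, abs_of_nonneg (by linarith)]
    exact ⟨by linarith, hle⟩

/-- For the symmetric balanced mixture q₀(y) = ½φ(y-θ*) + ½φ(y+θ*),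
if θ*, θ⁰ > 0 and θ^{t+1} = ∫ y tanh(θ^t y) q₀(y) dy, then
|θ^t - θ*| ≤ ρ^t |θ⁰ - θ*| with ρ = exp(-min{θ⁰,θ*}²/2). -/
theorem stmt_5 (θstar θ0 : ℝ) (hθstar : 0 < θstar) (hθ0 : 0 < θ0)
    (q0 : ℝ → ℝ)
    (hq0 : ∀ y, q0 y = (1/2) * ((Real.sqrt (2 * Real.pi))⁻¹ * Real.exp (-((y - θstar) ^ 2) / 2))
        + (1/2) * ((Real.sqrt (2 * Real.pi))⁻¹ * Real.exp (-((y + θstar) ^ 2) / 2)))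
    (th : ℕ → ℝ) (hinit : th 0 = θ0)
    (hstep : ∀ t : ℕ, th (t + 1) = ∫ y, y * Real.tanh (th t * y) * q0 y) :
    ∀ t : ℕ, |th t - θstar| ≤
      (Real.exp (-(min θ0 θstar) ^ 2 / 2)) ^ t * |θ0 - θstar| := by
  set m := min θ0 θstar
  have hm : 0 < m := lt_min hθ0 hθstar
  have hq : q0 = balancedMixturePDF θstar := funext fun y ↦ by
    rw [hq0, balancedMixturePDF, gaussianPDFReal_one_apply, gaussianPDFReal_one_apply,
      sub_neg_eq_add, one_div]
  have hiter (t : ℕ) : th t = (emUpdate θstar)^[t] θ0 := by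
    induction t with
    | zero => exact hinit
    | succ t ih => rw [Function.iterate_succ_apply', ← ih, hstep, hq, emUpdate]
  have hmaps : MapsTo (emUpdate θstar) (Ici m) (Ici m) := fun x hx ↦
    (le_min hx (min_le_right _ _)).trans (emUpdate_contraction hθstar.le (hm.le.trans hx)).1
  have hcontr : ∀ x ∈ Ici m,
      dist (emUpdate θstar x) θstar ≤ exp (-m ^ 2 / 2) * dist x θstar := fun x hx ↦ by
    have hmin : m ≤ min x θstar := le_min hx (min_le_right _ _)
    rw [dist_eq, dist_eq]
    refine (emUpdate_contraction hθstar.le (hm.le.trans hx)).2.trans ?_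
    gcongr
  intro t
  simpa only [hiter, dist_eq] using
    dist_iterate_le_pow_mul (exp_pos _).le hmaps hcontr (min_le_left θ0 θstar) t
end

section
/- Let P₀ be a probability measure on a finite set X, μ_Y a probability measure on a measurable space Y, and g^θ : X × Y → ℝ measurable with e^{-g^θ(x,·)} a probability density w.r.t. a base measure μ for each x. Then the entropic OT cost S_θ(P₀, μ_Y) = inf_{π ∈ Π(P₀,μ_Y)} [∫ g^θ dπ + H(π | P₀ ⊗ μ_Y)] satisfies S_θ(P₀, μ_Y) ≥ -E_{Y∼μ_Y} log q^θ(Y), where q^θ(y) = ∑_x P₀(x) e^{-g^θ(x,y)}. -/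
/-!
Reweight the reference measure `P₀ ⊗ μ_Y` by the posterior `P₀(x) e^{-g(x,y)} / q(y)`: since
this is normalised in `x` for every `y`, it is again a probability measure `ρ`. For a coupling
`π` one has `log dπ/dρ = log dπ/d(P₀ ⊗ μ_Y) + g + log q ∘ snd`, and the second marginal of `π`
is `μ_Y`, so Gibbs' inequality `H(π | ρ) ≥ 0` is exactly the claim.
-/

open MeasureTheory

section LogDensity

open Real

variable {α : Type*} [MeasurableSpace α] {μ ν : Measure α} {f : α → ℝ}

lemma llr_withDensity_ofReal_exp [SigmaFinite μ] [SigmaFinite ν] (hμν : μ ≪ ν)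
    (hf : Measurable f) :
    llr μ (ν.withDensity fun x => ENNReal.ofReal (exp (f x))) =ᵐ[μ]
      fun x => llr μ ν x - f x := by
  have hrn := Measure.rnDeriv_withDensity_right_of_absolutelyContinuous hμν
    (hf.exp.ennreal_ofReal).aemeasurable
    (.of_forall fun x => by simp [exp_pos]) (.of_forall fun _ => ENNReal.ofReal_ne_top)
  filter_upwards [hμν.ae_le hrn, Measure.rnDeriv_pos hμν,
    hμν.ae_le (Measure.rnDeriv_lt_top μ ν)] with x hx hpos hlt
  have hD : (μ.rnDeriv ν x).toReal ≠ 0 := (ENNReal.toReal_pos hpos.ne' hlt.ne).ne'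
  rw [llr, hx, ENNReal.toReal_mul, ENNReal.toReal_inv, ENNReal.toReal_ofReal (exp_pos _).le,
    log_mul (inv_ne_zero (exp_pos _).ne') hD, log_inv, log_exp, llr]
  ring

lemma integral_le_integral_llr [IsProbabilityMeasure μ] [SigmaFinite ν]
    [IsProbabilityMeasure (ν.withDensity fun x => ENNReal.ofReal (exp (f x)))]
    (hμν : μ ≪ ν) (hf : Measurable f) (hfμ : Integrable f μ) (h_int : Integrable (llr μ ν) μ) :
    ∫ x, f x ∂μ ≤ ∫ x, llr μ ν x ∂μ := by
  have hllr := llr_withDensity_ofReal_exp hμν hf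
  have hac : μ ≪ ν.withDensity fun x => ENNReal.ofReal (exp (f x)) :=
    hμν.trans (withDensity_absolutelyContinuous' hf.exp.ennreal_ofReal.aemeasurable
      (.of_forall fun x => by simp [exp_pos]))
  have hgibbs := InformationTheory.integral_llr_add_sub_measure_univ_nonneg hac
    ((h_int.sub hfμ).congr hllr.symm)
  rw [integral_congr_ae hllr, integral_sub h_int hfμ] at hgibbs
  simp only [probReal_univ] at hgibbs
  linarith

end LogDensity

lemma isProbabilityMeasure_prod_withDensity {α β : Type*} [MeasurableSpace α]
    [MeasurableSpace β] {P : Measure α} [SFinite P] {ν : Measure β} [IsProbabilityMeasure ν]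
    {d : α × β → ENNReal} (hd : Measurable d) (h_one : ∀ y, ∫⁻ x, d (x, y) ∂P = 1) :
    IsProbabilityMeasure ((P.prod ν).withDensity d) := by
  constructor
  rw [withDensity_apply _ MeasurableSet.univ, Measure.restrict_univ,
    lintegral_prod_symm' _ hd]
  simp [h_one]

section Mixture

open Real

variable {X Y : Type*} [Fintype X] [MeasurableSpace X]

/-- The likelihood `q^θ` of the paper. -/
noncomputable def mixtureLikelihood (P0 : Measure X) (g : X → Y → ℝ) (y : Y) : ℝ :=
  ∑ x, (P0 {x}).toReal * exp (-(g x y))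

lemma mixtureLikelihood_pos [MeasurableSingletonClass X] (P0 : Measure X) [IsFiniteMeasure P0]
    [NeZero P0] (g : X → Y → ℝ) (y : Y) : 0 < mixtureLikelihood P0 g y := by
  obtain ⟨x₀, hx₀⟩ : ∃ x : X, P0 {x} ≠ 0 := by
    by_contra! h
    refine NeZero.ne P0 (Measure.measure_univ_eq_zero.mp ?_)
    rw [← Set.iUnion_of_singleton X]
    exact measure_iUnion_null h
  refine lt_of_lt_of_le ?_ (Finset.single_le_sum (fun x _ => ?_) (Finset.mem_univ x₀))
  · exact mul_pos (ENNReal.toReal_pos hx₀ (measure_ne_top _ _)) (exp_pos _)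
  · positivity

lemma measurable_mixtureLikelihood [MeasurableSpace Y] (P0 : Measure X) {g : X → Y → ℝ}
    (hg : ∀ x, Measurable (g x)) : Measurable (mixtureLikelihood P0 g) :=
  Finset.measurable_sum _ fun x _ => ((hg x).neg.exp).const_mul _

lemma lintegral_exp_neg_sub_log_mixtureLikelihood [MeasurableSingletonClass X]
    (P0 : Measure X) [IsFiniteMeasure P0] [NeZero P0] (g : X → Y → ℝ) (y : Y) :
    ∫⁻ x, ENNReal.ofReal (exp (-g x y - log (mixtureLikelihood P0 g y))) ∂P0 = 1 := by
  have hq := mixtureLikelihood_pos P0 g y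
  have hterm : ∀ x, ENNReal.ofReal (exp (-g x y - log (mixtureLikelihood P0 g y))) * P0 {x}
      = ENNReal.ofReal ((P0 {x}).toReal * exp (-g x y) / mixtureLikelihood P0 g y) := by
    intro x
    rw [exp_sub, exp_log hq, mul_comm, ← ENNReal.ofReal_toReal (measure_ne_top P0 {x}),
      ← ENNReal.ofReal_mul ENNReal.toReal_nonneg, ENNReal.toReal_ofReal ENNReal.toReal_nonneg,
      mul_div_assoc]
  rw [lintegral_fintype]
  simp_rw [hterm]
  rw [← ENNReal.ofReal_sum_of_nonneg (fun x _ => by positivity), ← Finset.sum_div,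
    ← mixtureLikelihood, div_self hq.ne', ENNReal.ofReal_one]

end Mixture

theorem stmt_9_general {X Y : Type*} [Fintype X] [MeasurableSpace X] [MeasurableSingletonClass X]
    [MeasurableSpace Y]
    (P0 : Measure X) [IsProbabilityMeasure P0]
    (μY : Measure Y) [IsProbabilityMeasure μY]
    (g : X → Y → ℝ) (hgm : ∀ x, Measurable (g x))
    (hqint : Integrable (fun y =>
      Real.log (∑ x, (P0 {x}).toReal * Real.exp (-(g x y)))) μY) :
    ∀ π : Measure (X × Y), IsProbabilityMeasure π →
      π.map Prod.fst = P0 → π.map Prod.snd = μY →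
      π ≪ P0.prod μY →
      Integrable (fun p : X × Y => g p.1 p.2) π →
      Integrable (llr π (P0.prod μY)) π →
      (∫ p : X × Y, g p.1 p.2 ∂π) + (∫ p, llr π (P0.prod μY) p ∂π) ≥
        - ∫ y, Real.log (∑ x, (P0 {x}).toReal * Real.exp (-(g x y))) ∂μY := by
  intro π _ _ hsnd hac hgint hllrint
  set logq : Y → ℝ := fun y => Real.log (mixtureLikelihood P0 g y)
  have hlogq_meas : Measurable logq := (measurable_mixtureLikelihood P0 hgm).log
  have hlogq_int : Integrable (fun p : X × Y => logq p.2) π :=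
    (hsnd ▸ hqint : Integrable logq (π.map Prod.snd)).comp_measurable measurable_snd
  have hlogq_integral : ∫ p : X × Y, logq p.2 ∂π = ∫ y, logq y ∂μY := by
    rw [← hsnd, integral_map measurable_snd.aemeasurable hlogq_meas.aestronglyMeasurable]
  have hg_meas : Measurable fun p : X × Y => g p.1 p.2 :=
    measurable_from_prod_countable_right fun x => hgm x
  have hlogρ_meas : Measurable fun p : X × Y => -g p.1 p.2 - logq p.2 :=
    hg_meas.neg.sub (hlogq_meas.comp measurable_snd)
  have : IsProbabilityMeasure ((P0.prod μY).withDensity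
      fun p => ENNReal.ofReal (Real.exp (-g p.1 p.2 - logq p.2))) :=
    isProbabilityMeasure_prod_withDensity hlogρ_meas.exp.ennreal_ofReal
      (lintegral_exp_neg_sub_log_mixtureLikelihood P0 g)
  have hgibbs := integral_le_integral_llr hac hlogρ_meas (hgint.neg.sub hlogq_int) hllrint
  rw [integral_sub (f := fun p => -g p.1 p.2) hgint.neg hlogq_int, integral_neg,
    hlogq_integral] at hgibbs
  change _ ≥ -∫ y, logq y ∂μY
  linarith

/-- entropic OT dominates negative log-likelihood. For X finite,
P₀ a probability on X, μ_Y a probability on Y, cost g with e^{-g(x,·)} a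
probability density w.r.t. a base measure μ, any coupling π of (P₀, μ_Y) that is
absolutely continuous w.r.t. P₀ ⊗ μ_Y satisfies
∫ g dπ + H(π | P₀ ⊗ μ_Y) ≥ -E_{Y∼μ_Y} log q(Y), where q(y) = ∑_x P₀(x) e^{-g(x,y)}.
(Couplings not absolutely continuous have H = +∞, so the infimum over all
couplings also dominates the right-hand side.) -/
theorem stmt_9 {X Y : Type*} [Fintype X] [MeasurableSpace X] [MeasurableSingletonClass X]
    [MeasurableSpace Y]
    (P0 : Measure X) [IsProbabilityMeasure P0]
    (μY : Measure Y) [IsProbabilityMeasure μY]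
    (μ : Measure Y) [SigmaFinite μ]
    (g : X → Y → ℝ) (hgm : ∀ x, Measurable (g x))
    (hdens : ∀ x, ∫ y, Real.exp (-(g x y)) ∂μ = 1)
    (hqint : Integrable (fun y =>
      Real.log (∑ x, (P0 {x}).toReal * Real.exp (-(g x y)))) μY) :
    ∀ π : Measure (X × Y), IsProbabilityMeasure π →
      π.map Prod.fst = P0 → π.map Prod.snd = μY →
      π ≪ P0.prod μY →
      Integrable (fun p : X × Y => g p.1 p.2) π →
      Integrable (llr π (P0.prod μY)) π →
      (∫ p : X × Y, g p.1 p.2 ∂π) + (∫ p, llr π (P0.prod μY) p ∂π) ≥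
        - ∫ y, Real.log (∑ x, (P0 {x}).toReal * Real.exp (-(g x y))) ∂μY :=
  stmt_9_general P0 μY g hgm hqint
end

section
/- In the setting above, with (X,Y) distributed as dQ^{θ*}(x,y) = e^{-g^{θ*}(x,y)} dP₀(x) dμ(y) and μ_Y the Y-marginal of Q^{θ*}, the coupling π* given by the joint law of (X,Y) is feasible for the entropic OT problem and achieves S_{θ*}(P₀, μ_Y) = -E_{Y∼μ_Y} log q^{θ*}(Y). Consequently, θ* is a global minimizer of θ ↦ S_θ(P₀, μ_Y). -/
/-! With `q = mixtureDensity P0 (g θ*)` and `Q^θ = jointLaw P0 μ (g θ)`, the marginal `μY` of `Q^θ*`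
is `q • μ`, so `Q^θ` has log-density `-g θ - log q` with respect to `P0 ⊗ μY`. The
Donsker–Varadhan inequality for this log-density bounds `∫ g θ dπ + KL(π ‖ P0 ⊗ μY)` below by
`-∫ log q dμY` for every coupling `π` whose second marginal is `μY`. For `θ = θ*` and `π = Q^θ*`
the log-likelihood ratio is exactly that log-density, and the bound is attained. -/

open MeasureTheory Real InformationTheory
open scoped ENNReal

section DonskerVaradhan

variable {α : Type*} [MeasurableSpace α] {m ν : Measure α} {f : α → ℝ}

theorem integral_le_integral_llr_add_log_integral_exp [IsProbabilityMeasure m] [SigmaFinite ν]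
    (hmν : m ≪ ν) (hfm : Integrable f m) (hfν : Integrable (fun x ↦ exp (f x)) ν)
    (hllr : Integrable (llr m ν) m) :
    ∫ x, f x ∂m ≤ ∫ x, llr m ν x ∂m + log (∫ x, exp (f x) ∂ν) := by
  have : NeZero ν := ⟨fun h ↦ by simpa using hmν (show ν Set.univ = 0 by simp [h])⟩
  have : IsProbabilityMeasure (ν.tilted f) := isProbabilityMeasure_tilted hfν
  have hm_tilted : m ≪ ν.tilted f := hmν.trans (absolutelyContinuous_tilted hfν)
  have gibbs := integral_llr_add_sub_measure_univ_nonneg hm_tilted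
    (integrable_llr_tilted_right hmν hfm hllr hfν)
  rw [integral_llr_tilted_right hmν hfm hfν hllr] at gibbs
  simp only [probReal_univ] at gibbs
  linarith

theorem integrable_exp_and_integral_exp_eq_one (hf : AEMeasurable f ν)
    (hprob : IsProbabilityMeasure (ν.withDensity fun x ↦ ENNReal.ofReal (exp (f x)))) :
    Integrable (fun x ↦ exp (f x)) ν ∧ ∫ x, exp (f x) ∂ν = 1 := by
  have hlint : ∫⁻ x, ENNReal.ofReal (exp (f x)) ∂ν = 1 := by
    rw [← setLIntegral_univ, ← withDensity_apply _ .univ, measure_univ]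
  have hmeas : AEStronglyMeasurable (fun x ↦ exp (f x)) ν := hf.exp.aestronglyMeasurable
  refine ⟨⟨hmeas, ?_⟩, ?_⟩
  · rw [hasFiniteIntegral_iff_ofReal (ae_of_all _ fun _ ↦ (exp_pos _).le), hlint]
    exact ENNReal.one_lt_top
  · rw [integral_eq_lintegral_of_nonneg_ae (ae_of_all _ fun _ ↦ (exp_pos _).le) hmeas, hlint,
      ENNReal.toReal_one]

theorem llr_withDensity_exp [SigmaFinite ν] (hf : Measurable f) :
    llr (ν.withDensity fun x ↦ ENNReal.ofReal (exp (f x))) ν =ᵐ[ν] f := by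
  filter_upwards [Measure.rnDeriv_withDensity ν hf.exp.ennreal_ofReal] with x hx
  simp only [llr_def, hx, ENNReal.toReal_ofReal (exp_pos _).le, log_exp]

theorem integral_le_integral_llr_of_isProbabilityMeasure_withDensity [IsProbabilityMeasure m]
    [SigmaFinite ν] (hmν : m ≪ ν) (hfm : Integrable f m) (hf : AEMeasurable f ν)
    (hllr : Integrable (llr m ν) m)
    (hprob : IsProbabilityMeasure (ν.withDensity fun x ↦ ENNReal.ofReal (exp (f x)))) :
    ∫ x, f x ∂m ≤ ∫ x, llr m ν x ∂m := by
  obtain ⟨hfν, hZ⟩ := integrable_exp_and_integral_exp_eq_one hf hprob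
  simpa [hZ] using integral_le_integral_llr_add_log_integral_exp hmν hfm hfν hllr

end DonskerVaradhan

section ProdWithDensity

variable {X Y : Type*} [MeasurableSpace X] [MeasurableSpace Y] {P : Measure X} {μ : Measure Y}
  {f : X × Y → ℝ≥0∞}

theorem map_fst_withDensity_prod [SFinite P] [SFinite μ] (hf : Measurable f)
    (hf1 : ∀ x, ∫⁻ y, f (x, y) ∂μ = 1) :
    ((P.prod μ).withDensity f).map Prod.fst = P := by
  ext s hs
  rw [Measure.map_apply measurable_fst hs, ← Set.prod_univ, withDensity_apply _ (hs.prod .univ),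
    ← Measure.prod_restrict, Measure.restrict_univ, lintegral_prod _ hf.aemeasurable]
  simp [hf1]

theorem map_snd_withDensity_prod [SFinite P] [SFinite μ] (hf : Measurable f) :
    ((P.prod μ).withDensity f).map Prod.snd = μ.withDensity fun y ↦ ∫⁻ x, f (x, y) ∂P := by
  ext s hs
  rw [Measure.map_apply measurable_snd hs, ← Set.univ_prod,
    withDensity_apply _ (MeasurableSet.univ.prod hs), ← Measure.prod_restrict,
    Measure.restrict_univ, lintegral_prod_symm _ hf.aemeasurable, withDensity_apply _ hs]

theorem withDensity_prod_eq_withDensity_prod_withDensity [SFinite μ] {d : Y → ℝ≥0∞}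
    (hd : Measurable d) (hd0 : ∀ y, d y ≠ 0) (hdtop : ∀ y, d y ≠ ∞) (hf : Measurable f) :
    (P.prod μ).withDensity f = (P.prod (μ.withDensity d)).withDensity fun p ↦ f p / d p.2 := by
  rw [prod_withDensity_right hd, ← withDensity_mul (f := fun p ↦ d p.2)
    (g := fun p ↦ f p / d p.2) _ (hd.comp measurable_snd) (hf.div (hd.comp measurable_snd))]
  congr with p
  exact (ENNReal.mul_div_cancel (hd0 p.2) (hdtop p.2)).symm

end ProdWithDensity

theorem measurable_uncurry_of_countable {X Y γ : Type*} [MeasurableSpace X] [Countable X]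
    [MeasurableSingletonClass X] [MeasurableSpace Y] [MeasurableSpace γ] {G : X → Y → γ}
    (hG : ∀ x, Measurable (G x)) : Measurable fun p : X × Y ↦ G p.1 p.2 :=
  measurable_from_prod_countable_right hG

noncomputable def mixtureDensity {X Y : Type*} [Fintype X] [MeasurableSpace X]
    (P0 : Measure X) (G : X → Y → ℝ) (y : Y) : ℝ :=
  ∑ x, (P0 {x}).toReal * exp (-G x y)

noncomputable def jointLaw {X Y : Type*} [MeasurableSpace X] [MeasurableSpace Y]
    (P0 : Measure X) (μ : Measure Y) (G : X → Y → ℝ) : Measure (X × Y) :=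
  (P0.prod μ).withDensity fun p ↦ ENNReal.ofReal (exp (-G p.1 p.2))

section mixtureDensity

variable {X Y : Type*} [Fintype X] [MeasurableSpace X] (P0 : Measure X) {G : X → Y → ℝ}

theorem measurable_mixtureDensity [MeasurableSpace Y] (hG : ∀ x, Measurable (G x)) :
    Measurable (mixtureDensity P0 G) :=
  Finset.measurable_sum _ fun x _ ↦ ((hG x).neg.exp.const_mul _)

variable [IsFiniteMeasure P0]

theorem mixtureDensity_pos [NeZero P0] (y : Y) : 0 < mixtureDensity P0 G y := by
  obtain ⟨x, hx⟩ : ∃ x, P0 {x} ≠ 0 := by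
    by_contra! h
    exact NeZero.ne P0 (Measure.measure_univ_eq_zero.mp (by
      rw [← Set.iUnion_of_singleton, measure_iUnion_null h]))
  refine Finset.sum_pos' (fun x _ ↦ by positivity) ⟨x, Finset.mem_univ x, ?_⟩
  exact mul_pos (ENNReal.toReal_pos hx (measure_ne_top _ _)) (exp_pos _)

theorem ofReal_mixtureDensity [MeasurableSingletonClass X] (y : Y) :
    ENNReal.ofReal (mixtureDensity P0 G y) = ∫⁻ x, ENNReal.ofReal (exp (-G x y)) ∂P0 := by
  rw [lintegral_fintype, mixtureDensity, ENNReal.ofReal_sum_of_nonneg fun x _ ↦ by positivity]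
  refine Finset.sum_congr rfl fun x _ ↦ ?_
  rw [ENNReal.ofReal_mul ENNReal.toReal_nonneg, ENNReal.ofReal_toReal (measure_ne_top _ _),
    mul_comm]

end mixtureDensity

namespace jointLaw

variable {X Y : Type*} [MeasurableSpace X] [MeasurableSpace Y] (P0 : Measure X) (μ : Measure Y)
  [SFinite μ] {G G₀ : X → Y → ℝ}

theorem measurable_density [Countable X] [MeasurableSingletonClass X]
    (hG : ∀ x, Measurable (G x)) :
    Measurable fun p : X × Y ↦ ENNReal.ofReal (exp (-G p.1 p.2)) :=
  (measurable_uncurry_of_countable hG).neg.exp.ennreal_ofReal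

variable [Fintype X] [MeasurableSingletonClass X]

theorem map_fst [SFinite P0] (hG : ∀ x, Measurable (G x))
    (hdens : ∀ x, ∫ y, exp (-G x y) ∂μ = 1) : (jointLaw P0 μ G).map Prod.fst = P0 := by
  refine map_fst_withDensity_prod (measurable_density hG) fun x ↦ ?_
  have hint : Integrable (fun y ↦ exp (-G x y)) μ := .of_integral_ne_zero (by simp [hdens x])
  rw [← ofReal_integral_eq_lintegral_ofReal hint (ae_of_all _ fun _ ↦ (exp_pos _).le), hdens x,
    ENNReal.ofReal_one]

theorem isProbabilityMeasure [IsProbabilityMeasure P0] (hG : ∀ x, Measurable (G x))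
    (hdens : ∀ x, ∫ y, exp (-G x y) ∂μ = 1) : IsProbabilityMeasure (jointLaw P0 μ G) := by
  constructor
  rw [← Set.preimage_univ (f := Prod.fst), ← Measure.map_apply measurable_fst .univ,
    map_fst P0 μ hG hdens, measure_univ]

variable [IsFiniteMeasure P0]

theorem map_snd (hG : ∀ x, Measurable (G x)) :
    (jointLaw P0 μ G).map Prod.snd =
      μ.withDensity fun y ↦ ENNReal.ofReal (mixtureDensity P0 G y) := by
  simp only [jointLaw, map_snd_withDensity_prod (measurable_density hG), ofReal_mixtureDensity]

theorem eq_withDensity_prod_map_snd [NeZero P0] (hG : ∀ x, Measurable (G x))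
    (hG₀ : ∀ x, Measurable (G₀ x)) :
    jointLaw P0 μ G = (P0.prod ((jointLaw P0 μ G₀).map Prod.snd)).withDensity
      fun p ↦ ENNReal.ofReal (exp (-G p.1 p.2 - log (mixtureDensity P0 G₀ p.2))) := by
  have hq := mixtureDensity_pos P0 (G := G₀)
  rw [map_snd P0 μ hG₀, jointLaw, withDensity_prod_eq_withDensity_prod_withDensity
    (measurable_mixtureDensity P0 hG₀).ennreal_ofReal
    (fun y ↦ (ENNReal.ofReal_pos.mpr (hq y)).ne') (fun _ ↦ ENNReal.ofReal_ne_top)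
    (measurable_density hG)]
  congr with p
  rw [exp_sub, exp_log (hq p.2), ENNReal.ofReal_div_of_pos (hq p.2)]

theorem absolutelyContinuous_prod_map_snd [NeZero P0] (hG : ∀ x, Measurable (G x))
    (hG₀ : ∀ x, Measurable (G₀ x)) :
    jointLaw P0 μ G ≪ P0.prod ((jointLaw P0 μ G₀).map Prod.snd) := by
  rw [eq_withDensity_prod_map_snd P0 μ hG hG₀]
  exact withDensity_absolutelyContinuous _ _

end jointLaw

def entropicCosts {X Y : Type*} [MeasurableSpace X] [MeasurableSpace Y] (P0 : Measure X)
    (μY : Measure Y) (G : X → Y → ℝ) : Set ℝ :=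
  {v : ℝ | ∃ m : Measure (X × Y), IsProbabilityMeasure m ∧
    m.map Prod.fst = P0 ∧ m.map Prod.snd = μY ∧ m ≪ P0.prod μY ∧
    Integrable (fun p : X × Y => G p.1 p.2) m ∧
    Integrable (llr m (P0.prod μY)) m ∧
    v = (∫ p : X × Y, G p.1 p.2 ∂m) + ∫ p, llr m (P0.prod μY) p ∂m}

section Coupling

variable {X Y : Type*} [Fintype X] [MeasurableSpace X] [MeasurableSingletonClass X]
  [MeasurableSpace Y] (P0 : Measure X) [IsProbabilityMeasure P0] (μ : Measure Y) [SFinite μ]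
  {G G₀ : X → Y → ℝ}

local notation "Q₀" => jointLaw P0 μ G₀
local notation "μY" => Measure.map Prod.snd (jointLaw P0 μ G₀)

theorem neg_integral_log_mixtureDensity_mem_lowerBounds (hG : ∀ x, Measurable (G x))
    (hdens : ∀ x, ∫ y, exp (-G x y) ∂μ = 1) (hG₀ : ∀ x, Measurable (G₀ x))
    (hq : Integrable (fun y ↦ log (mixtureDensity P0 G₀ y)) μY) :
    -∫ y, log (mixtureDensity P0 G₀ y) ∂μY ∈ lowerBounds (entropicCosts P0 μY G) := by
  rintro _ ⟨m, hm, -, hm_snd, hmν, hGm, hllr, rfl⟩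
  have : IsProbabilityMeasure μY := by
    rw [← hm_snd]
    exact Measure.isProbabilityMeasure_map measurable_snd.aemeasurable
  have hq_meas : Measurable fun y ↦ log (mixtureDensity P0 G₀ y) :=
    (measurable_mixtureDensity P0 hG₀).log
  have hq_m : Integrable (fun p : X × Y ↦ log (mixtureDensity P0 G₀ p.2)) m := by
    rw [← hm_snd] at hq
    exact hq.comp_measurable measurable_snd
  have hq_int :
      ∫ p, log (mixtureDensity P0 G₀ p.2) ∂m = ∫ y, log (mixtureDensity P0 G₀ y) ∂μY := by
    rw [← hm_snd, integral_map measurable_snd.aemeasurable hq_meas.aestronglyMeasurable]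
  have hprob := jointLaw.isProbabilityMeasure P0 μ hG hdens
  rw [jointLaw.eq_withDensity_prod_map_snd P0 μ hG hG₀] at hprob
  have hdv := integral_le_integral_llr_of_isProbabilityMeasure_withDensity (ν := P0.prod μY)
    (f := fun p ↦ -G p.1 p.2 - log (mixtureDensity P0 G₀ p.2)) hmν (hGm.neg.sub hq_m)
    ((measurable_uncurry_of_countable hG).neg.sub (hq_meas.comp measurable_snd)).aemeasurable
    hllr hprob
  rw [integral_sub (f := fun p ↦ -G p.1 p.2) hGm.neg hq_m, integral_neg, hq_int] at hdv
  linarith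

theorem jointLaw.integral_add_integral_llr (hG₀ : ∀ x, Measurable (G₀ x))
    (hdens₀ : ∀ x, ∫ y, exp (-G₀ x y) ∂μ = 1) (hGQ : Integrable (fun p ↦ G₀ p.1 p.2) Q₀)
    (hq : Integrable (fun y ↦ log (mixtureDensity P0 G₀ y)) μY) :
    ∫ p, G₀ p.1 p.2 ∂Q₀ + ∫ p, llr Q₀ (P0.prod μY) p ∂Q₀ =
      -∫ y, log (mixtureDensity P0 G₀ y) ∂μY := by
  have := jointLaw.isProbabilityMeasure P0 μ hG₀ hdens₀
  have hq_meas : Measurable fun y ↦ log (mixtureDensity P0 G₀ y) :=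
    (measurable_mixtureDensity P0 hG₀).log
  have hllr :
      llr Q₀ (P0.prod μY) =ᵐ[Q₀] fun p ↦ -G₀ p.1 p.2 - log (mixtureDensity P0 G₀ p.2) := by
    have h := llr_withDensity_exp (ν := P0.prod μY)
      (f := fun p ↦ -G₀ p.1 p.2 - log (mixtureDensity P0 G₀ p.2))
      ((measurable_uncurry_of_countable hG₀).neg.sub (hq_meas.comp measurable_snd))
    rw [← jointLaw.eq_withDensity_prod_map_snd P0 μ hG₀ hG₀] at h
    exact (jointLaw.absolutelyContinuous_prod_map_snd P0 μ hG₀ hG₀).ae_le h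
  have hq_Q : Integrable (fun p : X × Y ↦ log (mixtureDensity P0 G₀ p.2)) Q₀ :=
    hq.comp_measurable measurable_snd
  rw [integral_congr_ae hllr, integral_sub (f := fun p ↦ -G₀ p.1 p.2) hGQ.neg hq_Q,
    integral_neg, integral_map measurable_snd.aemeasurable hq_meas.aestronglyMeasurable]
  ring

theorem jointLaw.mem_entropicCosts (hG₀ : ∀ x, Measurable (G₀ x))
    (hdens₀ : ∀ x, ∫ y, exp (-G₀ x y) ∂μ = 1) (hGQ : Integrable (fun p ↦ G p.1 p.2) Q₀)
    (hllr : Integrable (llr Q₀ (P0.prod μY)) Q₀) :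
    ∫ p, G p.1 p.2 ∂Q₀ + ∫ p, llr Q₀ (P0.prod μY) p ∂Q₀ ∈ entropicCosts P0 μY G :=
  ⟨_, jointLaw.isProbabilityMeasure P0 μ hG₀ hdens₀, jointLaw.map_fst P0 μ hG₀ hdens₀, rfl,
    jointLaw.absolutelyContinuous_prod_map_snd P0 μ hG₀ hG₀, hGQ, hllr, rfl⟩

theorem isLeast_entropicCosts (hG₀ : ∀ x, Measurable (G₀ x))
    (hdens₀ : ∀ x, ∫ y, exp (-G₀ x y) ∂μ = 1) (hGQ : Integrable (fun p ↦ G₀ p.1 p.2) Q₀)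
    (hllr : Integrable (llr Q₀ (P0.prod μY)) Q₀)
    (hq : Integrable (fun y ↦ log (mixtureDensity P0 G₀ y)) μY) :
    IsLeast (entropicCosts P0 μY G₀) (-∫ y, log (mixtureDensity P0 G₀ y) ∂μY) :=
  ⟨jointLaw.integral_add_integral_llr P0 μ hG₀ hdens₀ hGQ hq ▸
      jointLaw.mem_entropicCosts P0 μ hG₀ hdens₀ hGQ hllr,
    neg_integral_log_mixtureDensity_mem_lowerBounds P0 μ hG₀ hdens₀ hG₀ hq⟩

end Coupling

/-- With (X,Y) ∼ dQ^{θ*}(x,y) = e^{-g^{θ*}(x,y)} dP₀(x) dμ(y) and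
μ_Y the Y-marginal of Q^{θ*}, the joint law Q is a feasible coupling for the
entropic OT problem and achieves S_{θ*}(P₀,μ_Y) = -E_{Y∼μ_Y} log q^{θ*}(Y);
consequently, θ* is a global minimizer of θ ↦ S_θ(P₀,μ_Y). -/
theorem stmt_10 {X Y Θ : Type*} [Fintype X] [MeasurableSpace X] [MeasurableSingletonClass X]
    [MeasurableSpace Y]
    (P0 : Measure X) [IsProbabilityMeasure P0]
    (μ : Measure Y) [SigmaFinite μ]
    (g : Θ → X → Y → ℝ) (hgm : ∀ θ x, Measurable (g θ x))
    (hdens : ∀ θ x, ∫ y, Real.exp (-(g θ x y)) ∂μ = 1)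
    (θstar : Θ)
    (Q : Measure (X × Y))
    (hQ : Q = (P0.prod μ).withDensity
      (fun p => ENNReal.ofReal (Real.exp (-(g θstar p.1 p.2)))))
    (μY : Measure Y) (hμY : μY = Q.map Prod.snd)
    (S : Θ → ℝ)
    (hS : ∀ θ, S θ = sInf {v : ℝ | ∃ m : Measure (X × Y), IsProbabilityMeasure m ∧
      m.map Prod.fst = P0 ∧ m.map Prod.snd = μY ∧ m ≪ P0.prod μY ∧
      Integrable (fun p : X × Y => g θ p.1 p.2) m ∧
      Integrable (llr m (P0.prod μY)) m ∧
      v = (∫ p : X × Y, g θ p.1 p.2 ∂m) + ∫ p, llr m (P0.prod μY) p ∂m})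
    (hgQ : ∀ θ, Integrable (fun p : X × Y => g θ p.1 p.2) Q)
    (hllrQ : Integrable (llr Q (P0.prod μY)) Q)
    (hqint : ∀ θ, Integrable (fun y =>
      Real.log (∑ x, (P0 {x}).toReal * Real.exp (-(g θ x y)))) μY) :
    Q.map Prod.fst = P0 ∧ Q.map Prod.snd = μY ∧ Q ≪ P0.prod μY ∧
    (∫ p : X × Y, g θstar p.1 p.2 ∂Q) + (∫ p, llr Q (P0.prod μY) p ∂Q) =
      - ∫ y, Real.log (∑ x, (P0 {x}).toReal * Real.exp (-(g θstar x y))) ∂μY ∧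
    S θstar = - ∫ y, Real.log (∑ x, (P0 {x}).toReal * Real.exp (-(g θstar x y))) ∂μY ∧
    ∀ θ, S θstar ≤ S θ := by
  subst hQ hμY
  have hS_star : S θstar = _ := (hS θstar).trans (isLeast_entropicCosts P0 μ (hgm θstar)
    (hdens θstar) (hgQ θstar) hllrQ (hqint θstar)).csInf_eq
  refine ⟨jointLaw.map_fst P0 μ (hgm θstar) (hdens θstar), rfl,
    jointLaw.absolutelyContinuous_prod_map_snd P0 μ (hgm θstar) (hgm θstar),
    jointLaw.integral_add_integral_llr P0 μ (hgm θstar) (hdens θstar) (hgQ θstar) (hqint θstar),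
    hS_star, fun θ ↦ ?_⟩
  rw [hS_star, hS θ]
  exact le_csInf ⟨_, jointLaw.mem_entropicCosts P0 μ (hgm θstar) (hdens θstar) (hgQ θ) hllrQ⟩
    (neg_integral_log_mixtureDensity_mem_lowerBounds P0 μ (hgm θ) (hdens θ) (hgm θstar)
      (hqint θstar))
end

section
/- Fix θ* > 0 and constants L < 0, M > 0, N < 0 where L = (1-α*)²(1-α) - α α*², M = (2α*-1)(α+α*-2αα*), N = α*(1-α*)(1-2α) for 1/2 < α*, α* ≤ α < 1. Then for every θ ≥ θ* and y ≥ 0, g_θ(y) := L(e^{y(2θ-θ*)} - e^{-y(2θ-θ*)}) + M(e^{yθ*} - e^{-yθ*}) + N(e^{y(2θ+θ*)} - e^{-y(2θ+θ*)}) satisfies g_θ(y) ≤ (L+M)(e^{yθ*} - e^{-yθ*}) = (1-2α)(3α*² - 3α* + 1)(e^{yθ*} - e^{-yθ*}) ≤ 0. -/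
/-!
Since `L ≤ 0`, `N ≤ 0` and `x ↦ eˣ - e⁻ˣ` is monotone and nonnegative on `[0, ∞)`, replacing the
`2θ - θ*` term by the smaller `θ*` term and dropping the `2θ + θ*` term can only increase `g_θ(y)`.
What remains is `(L + M)(e^{yθ*} - e^{-yθ*})`, and `L + M = (1 - 2α)(3α*² - 3α* + 1)` is negative
because `3α*² - 3α* + 1` has negative discriminant.
-/

open Real

theorem monotone_exp_sub_exp_neg : Monotone fun x : ℝ => exp x - exp (-x) := fun _ _ h => by
  linarith [exp_le_exp.2 h, exp_le_exp.2 (neg_le_neg h)]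

theorem exp_sub_exp_neg_nonneg {x : ℝ} (hx : 0 ≤ x) : 0 ≤ exp x - exp (-x) := by
  simpa using monotone_exp_sub_exp_neg hx

section Coefficients

variable {a b : ℝ}

theorem sq_one_sub_mul_one_sub_lt (hb : 1 / 2 < b) (hba : b ≤ a) :
    (1 - b) ^ 2 * (1 - a) < a * b ^ 2 := by
  nlinarith

theorem two_mul_sub_one_mul_add_sub_pos (hb : 1 / 2 < b) (hba : b ≤ a) (ha : a < 1) :
    0 < (2 * b - 1) * (a + b - 2 * a * b) := by
  have : 0 < a * (1 - b) + b * (1 - a) := by nlinarith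
  nlinarith

theorem mul_one_sub_mul_one_sub_two_mul_neg (hb : 1 / 2 < b) (hba : b ≤ a) (ha : a < 1) :
    b * (1 - b) * (1 - 2 * a) < 0 :=
  mul_neg_of_pos_of_neg (mul_pos (by linarith) (by linarith)) (by linarith)

theorem three_mul_sq_sub_three_mul_add_one_pos (b : ℝ) : 0 < 3 * b ^ 2 - 3 * b + 1 := by
  nlinarith [sq_nonneg (b - 1 / 2)]

end Coefficients

theorem mul_add_mul_add_mul_le {L M N A B C : ℝ} (hL : L ≤ 0) (hN : N ≤ 0) (hBA : B ≤ A)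
    (hC : 0 ≤ C) : L * A + M * B + N * C ≤ (L + M) * B := by
  nlinarith [mul_le_mul_of_nonpos_left hBA hL, mul_nonpos_of_nonpos_of_nonneg hN hC]

/-- For 1/2 < α* ≤ α < 1, θ* > 0, with
L = (1-α*)²(1-α) - αα*² < 0, M = (2α*-1)(α+α*-2αα*) > 0, N = α*(1-α*)(1-2α) < 0,
for every θ ≥ θ* and y ≥ 0,
g_θ(y) = L(e^{y(2θ-θ*)} - e^{-y(2θ-θ*)}) + M(e^{yθ*} - e^{-yθ*}) + N(e^{y(2θ+θ*)} - e^{-y(2θ+θ*)})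
satisfies g_θ(y) ≤ (L+M)(e^{yθ*} - e^{-yθ*}) = (1-2α)(3α*²-3α*+1)(e^{yθ*}-e^{-yθ*}) ≤ 0. -/
theorem stmt_13 (θstar αstar α : ℝ) (hθstar : 0 < θstar)
    (hαstar : 1/2 < αstar) (hααstar : αstar ≤ α) (hα1 : α < 1)
    (L M N : ℝ)
    (hL : L = (1 - αstar) ^ 2 * (1 - α) - α * αstar ^ 2)
    (hM : M = (2 * αstar - 1) * (α + αstar - 2 * α * αstar))
    (hN : N = αstar * (1 - αstar) * (1 - 2 * α)) :
    L < 0 ∧ 0 < M ∧ N < 0 ∧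
    ∀ θ : ℝ, θstar ≤ θ → ∀ y : ℝ, 0 ≤ y →
      (L * (Real.exp (y * (2 * θ - θstar)) - Real.exp (-(y * (2 * θ - θstar))))
        + M * (Real.exp (y * θstar) - Real.exp (-(y * θstar)))
        + N * (Real.exp (y * (2 * θ + θstar)) - Real.exp (-(y * (2 * θ + θstar))))
        ≤ (L + M) * (Real.exp (y * θstar) - Real.exp (-(y * θstar)))) ∧
      (L + M) * (Real.exp (y * θstar) - Real.exp (-(y * θstar)))
        = (1 - 2 * α) * (3 * αstar ^ 2 - 3 * αstar + 1) *
            (Real.exp (y * θstar) - Real.exp (-(y * θstar))) ∧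
      (1 - 2 * α) * (3 * αstar ^ 2 - 3 * αstar + 1) *
          (Real.exp (y * θstar) - Real.exp (-(y * θstar))) ≤ 0 := by
  have hLneg : L < 0 := hL ▸ sub_neg.2 (sq_one_sub_mul_one_sub_lt hαstar hααstar)
  have hMpos : 0 < M := hM ▸ two_mul_sub_one_mul_add_sub_pos hαstar hααstar hα1
  have hNneg : N < 0 := hN ▸ mul_one_sub_mul_one_sub_two_mul_neg hαstar hααstar hα1
  refine ⟨hLneg, hMpos, hNneg, fun θ hθ y hy => ⟨?_, by rw [hL, hM]; ring, ?_⟩⟩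
  · exact mul_add_mul_add_mul_le hLneg.le hNneg.le
      (monotone_exp_sub_exp_neg (mul_le_mul_of_nonneg_left (by linarith) hy))
      (exp_sub_exp_neg_nonneg (mul_nonneg hy (by linarith)))
  · exact mul_nonpos_of_nonpos_of_nonneg (mul_nonpos_of_nonpos_of_nonneg (by linarith)
      (three_mul_sq_sub_three_mul_add_one_pos αstar).le)
      (exp_sub_exp_neg_nonneg (mul_nonneg hy hθstar.le))
end

section
/- Let θ* > 0, α* > 1/2, and α(θ) the tilted weight defined by G(θ,α(θ)) = α*, with α monotone on (θ*,∞). If α(θ) has a finite limit c as θ → +∞ then c = 1. Specifically, if c < 1 then by dominated convergence lim_{θ→∞} G(θ, α(θ)) = ∫_{y>0} q^{θ*}(y) dy ≠ α*, a contradiction. -/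
/-! Dividing by `exp (θ y)`, the tilted weight is `α / (α + (1 - α) exp (-2 y θ))`. While `α(θ)`
stays away from `0` and `1` it therefore converges to the indicator of `y > 0`, so by dominated
convergence `G(θ, α(θ))` tends to the mass that the mixture `q` puts on `(0, ∞)`. Writing `p` for
the mass of `N(-θ*, 1)` on `(0, ∞)`, that mass is `α* (1 - p) + (1 - α*) p = α* - (2α* - 1) p`,
which is strictly less than `α*`. Monotonicity keeps the limit `c` positive, so `c < 1` is
impossible. -/

open MeasureTheory Filter Set Real Topology ProbabilityTheory
open scoped NNReal

noncomputable def tiltWeight (α θ y : ℝ) : ℝ :=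
  α * exp (θ * y) / (α * exp (θ * y) + (1 - α) * exp (-(θ * y)))

lemma tiltWeight_eq (α θ y : ℝ) :
    tiltWeight α θ y = α / (α + (1 - α) * exp (-2 * y * θ)) := by
  have hexp : exp (-(θ * y)) = exp (-2 * y * θ) * exp (θ * y) := by
    rw [← exp_add]; ring_nf
  rw [tiltWeight, hexp, ← mul_div_mul_right α _ (exp_pos (θ * y)).ne']
  congr 1; ring

lemma measurable_tiltWeight (α θ : ℝ) : Measurable (tiltWeight α θ) := by
  unfold tiltWeight; fun_prop

lemma tiltWeight_mem_Icc {α : ℝ} (hα : α ∈ Icc 0 1) (θ y : ℝ) : tiltWeight α θ y ∈ Icc 0 1 := by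
  have hE := exp_pos (-2 * y * θ)
  have hden : α ≤ α + (1 - α) * exp (-2 * y * θ) := le_add_of_nonneg_right (by nlinarith [hα.2])
  rw [tiltWeight_eq]
  exact ⟨div_nonneg hα.1 (hα.1.trans hden), div_le_one_of_le₀ hden (hα.1.trans hden)⟩

lemma tendsto_tiltWeight {α : ℝ → ℝ} {c : ℝ} (hα : Tendsto α atTop (𝓝 c)) (hc : c ∈ Ioo 0 1)
    {y : ℝ} (hy : y ≠ 0) :
    Tendsto (fun θ => tiltWeight (α θ) θ y) atTop (𝓝 ((Ioi 0).indicator 1 y)) := by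
  simp only [tiltWeight_eq]
  have h1α : Tendsto (fun θ => 1 - α θ) atTop (𝓝 (1 - c)) := tendsto_const_nhds.sub hα
  rcases hy.lt_or_gt with hneg | hpos
  · have hE : Tendsto (fun θ => exp (-2 * y * θ)) atTop atTop :=
      tendsto_exp_atTop.comp (tendsto_id.const_mul_atTop (by linarith))
    have hden := hα.add_atTop (h1α.pos_mul_atTop (by linarith [hc.2]) hE)
    rw [indicator_of_notMem (show y ∉ Ioi 0 from not_lt.2 hneg.le)]
    exact hα.div_atTop hden
  · have hE : Tendsto (fun θ => exp (-2 * y * θ)) atTop (𝓝 0) :=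
      tendsto_exp_atBot.comp (tendsto_id.const_mul_atTop_of_neg (by linarith))
    have hden := hα.add (h1α.mul hE)
    rw [indicator_of_mem (mem_Ioi.2 hpos), Pi.one_apply]
    have hlim := hα.div hden (by simpa using hc.1.ne')
    rwa [mul_zero, add_zero, div_self hc.1.ne'] at hlim

theorem tendsto_integral_tiltWeight_mul {α : ℝ → ℝ} {c : ℝ} {q : ℝ → ℝ} (hq : Integrable q)
    (hrange : ∀ᶠ θ in atTop, α θ ∈ Icc 0 1) (hα : Tendsto α atTop (𝓝 c)) (hc : c ∈ Ioo 0 1) :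
    Tendsto (fun θ => ∫ y, tiltWeight (α θ) θ y * q y) atTop (𝓝 (∫ y in Ioi 0, q y)) := by
  rw [← integral_indicator measurableSet_Ioi]
  refine tendsto_integral_filter_of_dominated_convergence (fun y => ‖q y‖)
    (Eventually.of_forall fun θ =>
      ((measurable_tiltWeight _ _).aestronglyMeasurable.mul hq.aestronglyMeasurable))
    ?_ hq.norm ?_
  · filter_upwards [hrange] with θ hθ
    refine Eventually.of_forall fun y => ?_
    have hw := tiltWeight_mem_Icc hθ θ y
    rw [norm_mul, Real.norm_of_nonneg hw.1]
    exact mul_le_of_le_one_left (norm_nonneg _) hw.2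
  · filter_upwards [volume.ae_ne 0] with y hy
    have hlim := (tendsto_tiltWeight hα hc hy).mul_const (q y)
    rw [← indicator_mul_left] at hlim
    simpa only [Pi.one_apply, one_mul] using hlim

lemma setIntegral_Ioi_gaussianPDFReal_add_neg (μ : ℝ) {v : ℝ≥0} (hv : v ≠ 0) :
    (∫ y in Ioi 0, gaussianPDFReal μ v y) + ∫ y in Ioi 0, gaussianPDFReal (-μ) v y = 1 := by
  have hreflect : ∀ y, gaussianPDFReal (-μ) v y = gaussianPDFReal μ v (-y) := fun y => by
    simp only [gaussianPDFReal, sub_neg_eq_add, neg_sub_left, neg_sq, add_comm]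
  simp_rw [hreflect, integral_comp_neg_Ioi, neg_zero]
  rw [add_comm, intervalIntegral.integral_Iic_add_Ioi (integrable_gaussianPDFReal μ v).integrableOn
    (integrable_gaussianPDFReal μ v).integrableOn, integral_gaussianPDFReal_eq_one μ hv]

lemma setIntegral_Ioi_gaussianPDFReal_pos (μ : ℝ) {v : ℝ≥0} (hv : v ≠ 0) :
    0 < ∫ y in Ioi 0, gaussianPDFReal μ v y := by
  rw [setIntegral_pos_iff_support_of_nonneg_ae (ae_of_all _ (gaussianPDFReal_nonneg μ v))
    (integrable_gaussianPDFReal μ v).integrableOn]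
  have hsupp : Function.support (gaussianPDFReal μ v) = univ :=
    eq_univ_of_forall fun y => (gaussianPDFReal_pos μ v y hv).ne'
  simp [hsupp]

lemma setIntegral_Ioi_gaussianMixture_lt {a : ℝ} (ha : 1 / 2 < a) (μ : ℝ) {v : ℝ≥0} (hv : v ≠ 0) :
    ∫ y in Ioi 0, (a * gaussianPDFReal μ v y + (1 - a) * gaussianPDFReal (-μ) v y) < a := by
  have hint := integrable_gaussianPDFReal (v := v)
  rw [integral_add ((hint μ).integrableOn.const_mul a) ((hint (-μ)).integrableOn.const_mul _),
    integral_const_mul, integral_const_mul]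
  have hsum := setIntegral_Ioi_gaussianPDFReal_add_neg μ hv
  have hp := setIntegral_Ioi_gaussianPDFReal_pos (-μ) hv
  nlinarith

theorem stmt_17_general (θstar αstar : ℝ) (hα : 1/2 < αstar)
    (q : ℝ → ℝ)
    (hq : ∀ y, q y = αstar * ((Real.sqrt (2 * Real.pi))⁻¹ * Real.exp (-((y - θstar) ^ 2) / 2))
        + (1 - αstar) * ((Real.sqrt (2 * Real.pi))⁻¹ * Real.exp (-((y + θstar) ^ 2) / 2)))
    (G : ℝ → ℝ → ℝ)
    (hG : ∀ θ α, G θ α = ∫ y, (α * Real.exp (θ * y) /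
        (α * Real.exp (θ * y) + (1 - α) * Real.exp (-(θ * y)))) * q y)
    (αf : ℝ → ℝ) (hrange : ∀ θ, αf θ ∈ Set.Ioo (0:ℝ) 1)
    (hαfG : ∀ θ, G θ (αf θ) = αstar)
    (hmono : MonotoneOn αf (Set.Ioi θstar))
    (c : ℝ) (hlim : Tendsto αf atTop (nhds c)) :
    c = 1 := by
  have hq_eq : q = fun y => αstar * gaussianPDFReal θstar 1 y
      + (1 - αstar) * gaussianPDFReal (-θstar) 1 y := by
    funext y
    simp [hq, gaussianPDFReal]
  have hc_pos : 0 < c := by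
    have hθ1 : θstar + 1 ∈ Ioi θstar := by simp
    refine (hrange (θstar + 1)).1.trans_le (ge_of_tendsto hlim ?_)
    filter_upwards [eventually_ge_atTop (θstar + 1)] with θ hθ_ge
    exact hmono hθ1 (lt_of_lt_of_le hθ1 hθ_ge) hθ_ge
  have hc_le : c ≤ 1 := le_of_tendsto' hlim fun θ => (hrange θ).2.le
  by_contra hc
  have hq_int : Integrable q := hq_eq ▸
    ((integrable_gaussianPDFReal _ _).const_mul _).add ((integrable_gaussianPDFReal _ _).const_mul _)
  have hG_lim : Tendsto (fun θ => G θ (αf θ)) atTop (𝓝 (∫ y in Ioi 0, q y)) := by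
    simp only [hG]
    exact tendsto_integral_tiltWeight_mul hq_int (Eventually.of_forall fun θ => Ioo_subset_Icc_self
      (hrange θ)) hlim ⟨hc_pos, lt_of_le_of_ne hc_le hc⟩
  simp only [hαfG] at hG_lim
  have hmass := tendsto_nhds_unique tendsto_const_nhds hG_lim
  rw [hq_eq] at hmass
  exact (setIntegral_Ioi_gaussianMixture_lt hα θstar one_ne_zero).ne hmass.symm

/-- If the tilted weight α(θ) (defined by G(θ,α(θ)) = α*, with
α(θ) ∈ (0,1) and α monotone on (θ*,∞)) has a finite limit c as θ → +∞,
then c = 1. -/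
theorem stmt_17 (θstar αstar : ℝ) (hθ : 0 < θstar) (hα : 1/2 < αstar) (hα1 : αstar < 1)
    (q : ℝ → ℝ)
    (hq : ∀ y, q y = αstar * ((Real.sqrt (2 * Real.pi))⁻¹ * Real.exp (-((y - θstar) ^ 2) / 2))
        + (1 - αstar) * ((Real.sqrt (2 * Real.pi))⁻¹ * Real.exp (-((y + θstar) ^ 2) / 2)))
    (G : ℝ → ℝ → ℝ)
    (hG : ∀ θ α, G θ α = ∫ y, (α * Real.exp (θ * y) /
        (α * Real.exp (θ * y) + (1 - α) * Real.exp (-(θ * y)))) * q y)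
    (αf : ℝ → ℝ) (hrange : ∀ θ, αf θ ∈ Set.Ioo (0:ℝ) 1)
    (hαfG : ∀ θ, G θ (αf θ) = αstar)
    (hmono : MonotoneOn αf (Set.Ioi θstar))
    (c : ℝ) (hlim : Tendsto αf atTop (nhds c)) :
    c = 1 :=
  stmt_17_general θstar αstar hα q hq G hG αf hrange hαfG hmono c hlim
end

section
/- Suppose θ ≠ 0 and θ ≠ θ*, θ* > 0, α* ∈ (1/2,1). Then ∫_{y≥0} [2α*(1-α*)(2α*-1) e^{-θ*²} (e^{2θy} - 1)(e^{2θ*y} - e^{2θy})] / [e^{(θ*+2θ)y} (α* e^{θy} + (1-α*)e^{-θy})((1-α*)e^{θy} + α* e^{-θy})] φ(y) dy ≠ 0; indeed the integrand has a constant strict sign on (0,∞) (positive if 0 < θ < θ*, negative if θ < 0 or θ > θ*). -/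
/-!
Since `(e^{2θy} - 1)(e^{2θ*y} - e^{2θy}) = 4 e^{(θ*+2θ)y} sinh(θy) sinh((θ*-θ)y)`, the integrand
is `sinh(θy) sinh((θ*-θ)y)` times a positive weight, and that weight is at most a constant times
`e^{-y²/2}` because the product of the two mixture factors is at least `α*²`. For `y > 0` the
sinh product has the sign of `θ(θ*-θ)`, and its growth `e^{(|θ|+|θ*-θ|)y}` is integrable against
the Gaussian.
-/

open MeasureTheory Real Set

theorem setIntegral_pos_of_forall_pos {X : Type*} [MeasurableSpace X] {μ : Measure X}
    {f : X → ℝ} {s : Set X} (hs : MeasurableSet s) (hμs : μ s ≠ 0)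
    (hf : IntegrableOn f s μ) (hpos : ∀ x ∈ s, 0 < f x) : 0 < ∫ x in s, f x ∂μ := by
  have hsupp : s ⊆ Function.support f := fun x hx => (hpos x hx).ne'
  rw [setIntegral_pos_iff_support_of_nonneg_ae
    (ae_restrict_of_forall_mem hs fun x hx => (hpos x hx).le) hf, inter_eq_right.2 hsupp]
  exact pos_iff_ne_zero.2 hμs

theorem integrable_exp_mul_sub_sq_div_two (b : ℝ) :
    Integrable fun y : ℝ => exp (b * y - y ^ 2 / 2) := by
  have h := ((integrable_exp_neg_mul_sq (b := 1 / 2) (by norm_num)).comp_sub_right b).const_mul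
    (exp (b ^ 2 / 2))
  refine h.congr (ae_of_all _ fun y => ?_)
  simp only [← exp_add]
  ring_nf

theorem abs_sinh_le_exp_abs (x : ℝ) : |sinh x| ≤ exp |x| := by
  rw [abs_sinh]
  linarith [exp_sub_sinh |x|, cosh_pos |x|]

theorem exp_sub_one_mul_exp_sub_exp_eq_sinh_mul_sinh (a b y : ℝ) :
    (exp (2 * a * y) - 1) * (exp (2 * b * y) - exp (2 * a * y)) =
      4 * exp ((b + 2 * a) * y) * (sinh (a * y) * sinh ((b - a) * y)) := by
  rw [sinh_eq, sinh_eq]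
  ring_nf
  simp only [sq, ← exp_add]
  ring_nf

noncomputable def expMixProd (α u : ℝ) : ℝ :=
  (α * exp u + (1 - α) * exp (-u)) * ((1 - α) * exp u + α * exp (-u))

theorem sq_le_expMixProd {α : ℝ} (h0 : 0 ≤ α) (h1 : α ≤ 1) (u : ℝ) : α ^ 2 ≤ expMixProd α u := by
  have hcross : α ^ 2 = (α * exp u) * (α * exp (-u)) := by
    rw [mul_mul_mul_comm, ← exp_add, add_neg_cancel, exp_zero]; ring
  rw [hcross, expMixProd]
  gcongr <;> nlinarith [exp_pos u, exp_pos (-u)]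

theorem expMixProd_pos {α : ℝ} (h0 : 0 < α) (h1 : α ≤ 1) (u : ℝ) : 0 < expMixProd α u :=
  (pow_pos h0 2).trans_le (sq_le_expMixProd h0.le h1 u)

section SinhProductTimesGaussian

variable {a b C y : ℝ} {w f : ℝ → ℝ}

theorem sinh_mul_pos_iff (c : ℝ) (hy : 0 < y) : 0 < sinh (c * y) ↔ 0 < c :=
  sinh_pos_iff.trans (mul_pos_iff_of_pos_right hy)

theorem sinh_mul_neg_iff (c : ℝ) (hy : 0 < y) : sinh (c * y) < 0 ↔ c < 0 :=
  sinh_neg_iff.trans (by simpa using mul_lt_mul_iff_left₀ (b := c) (c := 0) hy)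

theorem sinh_mul_mul_sinh_mul_pos_iff (hy : 0 < y) :
    0 < sinh (a * y) * sinh (b * y) ↔ 0 < a * b := by
  simp only [mul_pos_iff, sinh_mul_pos_iff _ hy, sinh_mul_neg_iff _ hy]

theorem sinh_mul_mul_sinh_mul_neg_iff (hy : 0 < y) :
    sinh (a * y) * sinh (b * y) < 0 ↔ a * b < 0 := by
  simp only [mul_neg_iff, sinh_mul_pos_iff _ hy, sinh_mul_neg_iff _ hy]

theorem integrableOn_Ioi_sinh_mul_sinh_mul (hf : Measurable f)
    (hfw : ∀ y ∈ Ioi 0, f y = sinh (a * y) * sinh (b * y) * w y)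
    (hwC : ∀ y ∈ Ioi 0, |w y| ≤ C * exp (-y ^ 2 / 2)) :
    IntegrableOn f (Ioi 0) := by
  refine ((integrable_exp_mul_sub_sq_div_two (|a| + |b|)).const_mul C).integrableOn.mono'
    hf.aestronglyMeasurable (ae_restrict_of_forall_mem measurableSet_Ioi fun y hy => ?_)
  have hsinh (c : ℝ) : |sinh (c * y)| ≤ exp (|c| * y) := by
    simpa [abs_mul, abs_of_pos (mem_Ioi.1 hy)] using abs_sinh_le_exp_abs (c * y)
  calc ‖f y‖ = |sinh (a * y)| * |sinh (b * y)| * |w y| := by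
        rw [Real.norm_eq_abs, hfw y hy, abs_mul, abs_mul]
    _ ≤ exp (|a| * y) * exp (|b| * y) * (C * exp (-y ^ 2 / 2)) := by
        gcongr
        exacts [hsinh a, hsinh b, hwC y hy]
    _ = C * exp ((|a| + |b|) * y - y ^ 2 / 2) := by
        rw [show (|a| + |b|) * y - y ^ 2 / 2 = |a| * y + |b| * y + -y ^ 2 / 2 by ring,
          exp_add, exp_add]
        ring

theorem integral_Ici_sinh_mul_sinh_mul_pos (hf : Measurable f)
    (hfw : ∀ y ∈ Ioi 0, f y = sinh (a * y) * sinh (b * y) * w y) (hw : ∀ y ∈ Ioi 0, 0 < w y)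
    (hwC : ∀ y ∈ Ioi 0, w y ≤ C * exp (-y ^ 2 / 2)) (hab : 0 < a * b) :
    0 < ∫ y in Ici 0, f y := by
  rw [integral_Ici_eq_integral_Ioi]
  refine setIntegral_pos_of_forall_pos measurableSet_Ioi (by simp)
    (integrableOn_Ioi_sinh_mul_sinh_mul hf hfw fun y hy => (abs_of_pos (hw y hy)).trans_le
      (hwC y hy)) fun y hy => ?_
  rw [hfw y hy]
  exact mul_pos ((sinh_mul_mul_sinh_mul_pos_iff hy).2 hab) (hw y hy)

theorem integral_Ici_sinh_mul_sinh_mul_neg (hf : Measurable f)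
    (hfw : ∀ y ∈ Ioi 0, f y = sinh (a * y) * sinh (b * y) * w y) (hw : ∀ y ∈ Ioi 0, 0 < w y)
    (hwC : ∀ y ∈ Ioi 0, w y ≤ C * exp (-y ^ 2 / 2)) (hab : a * b < 0) :
    ∫ y in Ici 0, f y < 0 := by
  rw [integral_Ici_eq_integral_Ioi, ← neg_pos, ← integral_neg]
  refine setIntegral_pos_of_forall_pos measurableSet_Ioi (by simp)
    (integrableOn_Ioi_sinh_mul_sinh_mul hf hfw fun y hy => (abs_of_pos (hw y hy)).trans_le
      (hwC y hy)).neg fun y hy => ?_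
  rw [hfw y hy, neg_pos]
  exact mul_neg_of_neg_of_pos ((sinh_mul_mul_sinh_mul_neg_iff hy).2 hab) (hw y hy)

end SinhProductTimesGaussian

/-- For θ ≠ 0, θ ≠ θ*, θ* > 0, α* ∈ (1/2,1), the integral
∫_{y≥0} 2α*(1-α*)(2α*-1)e^{-θ*²}(e^{2θy}-1)(e^{2θ*y}-e^{2θy}) /
 [e^{(θ*+2θ)y}(α*e^{θy}+(1-α*)e^{-θy})((1-α*)e^{θy}+α*e^{-θy})] φ(y) dy
is nonzero; in fact it is positive if 0 < θ < θ* and negative if θ < 0 or θ > θ*. -/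
theorem stmt_18 (θstar αstar θ : ℝ) (hθstar : 0 < θstar)
    (hα : 1/2 < αstar) (hα1 : αstar < 1) (hθ0 : θ ≠ 0) (hθθ : θ ≠ θstar)
    (f : ℝ → ℝ)
    (hf : ∀ y, f y = 2 * αstar * (1 - αstar) * (2 * αstar - 1) *
        Real.exp (-θstar ^ 2) *
        ((Real.exp (2 * θ * y) - 1) * (Real.exp (2 * θstar * y) - Real.exp (2 * θ * y))) /
        (Real.exp ((θstar + 2 * θ) * y) *
          (αstar * Real.exp (θ * y) + (1 - αstar) * Real.exp (-(θ * y))) *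
          ((1 - αstar) * Real.exp (θ * y) + αstar * Real.exp (-(θ * y)))) *
        ((Real.sqrt (2 * Real.pi))⁻¹ * Real.exp (-(y ^ 2) / 2))) :
    (∫ y in Set.Ici (0:ℝ), f y) ≠ 0 ∧
    (0 < θ → θ < θstar → 0 < ∫ y in Set.Ici (0:ℝ), f y) ∧
    ((θ < 0 ∨ θstar < θ) → (∫ y in Set.Ici (0:ℝ), f y) < 0) := by
  have hα0 : 0 < αstar := by linarith
  obtain ⟨c, hc⟩ : ∃ c : ℝ, c = 8 * αstar * (1 - αstar) * (2 * αstar - 1) *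
      exp (-θstar ^ 2) * (√(2 * π))⁻¹ := ⟨_, rfl⟩
  have hc0 : 0 < c := by
    have : 0 < 2 * αstar - 1 := by linarith
    have : 0 < 1 - αstar := by linarith
    rw [hc]
    positivity
  have hfw (y : ℝ) (_ : y ∈ Ioi 0) : f y = sinh (θ * y) * sinh ((θstar - θ) * y) *
      (c / expMixProd αstar (θ * y) * exp (-y ^ 2 / 2)) := by
    rw [hf, exp_sub_one_mul_exp_sub_exp_eq_sinh_mul_sinh, hc, expMixProd]
    field_simp
    ring
  have hw (y : ℝ) (_ : y ∈ Ioi 0) : 0 < c / expMixProd αstar (θ * y) * exp (-y ^ 2 / 2) := by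
    have := expMixProd_pos hα0 hα1.le (θ * y)
    positivity
  have hwC (y : ℝ) (_ : y ∈ Ioi 0) :
      c / expMixProd αstar (θ * y) * exp (-y ^ 2 / 2) ≤ c / αstar ^ 2 * exp (-y ^ 2 / 2) := by
    gcongr
    exact sq_le_expMixProd hα0.le hα1.le _
  have hmeas : Measurable f := funext hf ▸ by fun_prop
  have hpos (h0 : 0 < θ) (h1 : θ < θstar) : 0 < ∫ y in Ici 0, f y :=
    integral_Ici_sinh_mul_sinh_mul_pos hmeas hfw hw hwC (mul_pos h0 (sub_pos.2 h1))
  have hneg (h : θ < 0 ∨ θstar < θ) : ∫ y in Ici 0, f y < 0 :=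
    integral_Ici_sinh_mul_sinh_mul_neg hmeas hfw hw hwC (by rcases h with h | h <;> nlinarith)
  refine ⟨?_, hpos, hneg⟩
  rcases hθ0.lt_or_gt with h | h
  · exact (hneg (Or.inl h)).ne
  rcases hθθ.lt_or_gt with h' | h'
  · exact (hpos h h').ne'
  · exact (hneg (Or.inr h')).ne
end
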